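/- arXiv:1502.01533 — 12 statements merged into one kernel-verified Lean document; each statement's English description precedes it below -/
import Mathlib

section
/- The B-splines of order p are linearly independent: if c : ℤ → ℝ is a finitely supported family of coefficients such that Σ_{k∈ℤ} c_k φ_k^[p](t) = 0 for all t ∈ ℝ, then c_k = 0 for every k ∈ ℤ. -/
/-!
The B-spline `Bspline x p k` is nonnegative, vanishes to the left of `x (k - ⌊p/2⌋)` and is
positive just to the right of it. Hence, if `k₀` is the smallest index with `c k₀ ≠ 0`, evaluating
the combination at a point of `(x (k₀ - ⌊p/2⌋), x (k₀ - ⌊p/2⌋ + 1))` kills every other term and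
leaves `c k₀ * Bspline x p k₀ t ≠ 0`.
-/

/-- B-splines of order `p` on the strictly increasing knot sequence `x : ℤ → ℝ`,
defined by the recursion of Definition 2 of the paper.  `Bspline x p k` is the
B-spline of order `p` (degree `p-1`) associated with the knot `x k`. -/
noncomputable def Bspline (x : ℤ → ℝ) : ℕ → ℤ → ℝ → ℝ
  | 0, _, _ => 0
  | 1, k, t => if x k ≤ t ∧ t < x (k + 1) then 1 else 0
  | p + 2, k, t =>
      ((t - x (k - ((p + 2) / 2 : ℕ))) /
          (x (k + ((p + 3) / 2 : ℕ) - 1) - x (k - ((p + 2) / 2 : ℕ)))) *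
        Bspline x (p + 1) (k - 1 + ((p + 2) % 2 : ℕ)) t +
      ((x (k + ((p + 3) / 2 : ℕ)) - t) /
          (x (k + ((p + 3) / 2 : ℕ)) - x (k - ((p + 2) / 2 : ℕ) + 1))) *
        Bspline x (p + 1) (k + ((p + 2) % 2 : ℕ)) t

open Function Set

theorem eq_zero_of_finsum_mul_eq_zero_of_triangular {ι α R : Type*} [LinearOrder ι] [Ring R]
    [NoZeroDivisors R] (f : ι → α → R) (c : ι → R) (hc : (support c).Finite)
    (hf : ∀ k, ∃ t, f k t ≠ 0 ∧ ∀ j, k < j → f j t = 0)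
    (h : ∀ t, ∑ᶠ k, c k * f k t = 0) :
    ∀ k, c k = 0 := by
  by_contra! hne
  obtain ⟨k₀, hk₀, hmin⟩ := exists_min_image (support c) id hc hne
  obtain ⟨t, hft, hvanish⟩ := hf k₀
  have hsum : ∑ᶠ k, c k * f k t = c k₀ * f k₀ t := by
    refine finsum_eq_single _ k₀ fun k hk => ?_
    by_cases hck : c k = 0
    · rw [hck, zero_mul]
    · rw [hvanish k (lt_of_le_of_ne (hmin k hck) (Ne.symm hk)), mul_zero]
  exact mul_ne_zero hk₀ hft (hsum ▸ h t)

section Bspline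

variable (x : ℤ → ℝ)

/-- `Bspline x p (a + p / 2)` is supported on `[x a, x (a + p))`; indexed by `a`, the defining
recursion becomes the Cox–de Boor recursion. -/
theorem bspline_succ {n : ℕ} (hn : 1 ≤ n) (a : ℤ) (t : ℝ) :
    Bspline x (n + 1) (a + ((n + 1) / 2 : ℕ)) t =
      (t - x a) / (x (a + n) - x a) * Bspline x n (a + (n / 2 : ℕ)) t +
      (x (a + n + 1) - t) / (x (a + n + 1) - x (a + 1)) * Bspline x n (a + 1 + (n / 2 : ℕ)) t := by
  obtain ⟨m, rfl⟩ : ∃ m, n = m + 1 := ⟨n - 1, by omega⟩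
  have e₁ : a + ((m + 2) / 2 : ℕ) - ((m + 2) / 2 : ℕ) = a := by omega
  have e₂ : a + ((m + 2) / 2 : ℕ) + ((m + 3) / 2 : ℕ) = a + (m + 1 : ℕ) + 1 := by omega
  have e₃ : a + ((m + 2) / 2 : ℕ) - 1 + ((m + 2) % 2 : ℕ) = a + ((m + 1) / 2 : ℕ) := by omega
  have e₄ : a + ((m + 2) / 2 : ℕ) + ((m + 2) % 2 : ℕ) = a + 1 + ((m + 1) / 2 : ℕ) := by omega
  simp only [Bspline, e₁, e₂, e₃, e₄, add_sub_cancel_right]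

theorem bspline_one (k : ℤ) (t : ℝ) :
    Bspline x 1 k t = if x k ≤ t ∧ t < x (k + 1) then 1 else 0 := rfl

variable {x}

theorem bspline_eq_zero_of_lt (hx : Monotone x) (p : ℕ) {a : ℤ} {t : ℝ} (ht : t < x a) :
    Bspline x p (a + (p / 2 : ℕ)) t = 0 := by
  induction p generalizing a with
  | zero => rfl
  | succ n ih =>
    rcases Nat.eq_zero_or_pos n with rfl | hn
    · simp [bspline_one, not_le.mpr ht]
    · rw [bspline_succ x hn, ih ht, ih (ht.trans_le (hx (by omega))), mul_zero, mul_zero, add_zero]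

theorem bspline_eq_zero_of_le (hx : Monotone x) (p : ℕ) {a : ℤ} {t : ℝ} (ht : x (a + p) ≤ t) :
    Bspline x p (a + (p / 2 : ℕ)) t = 0 := by
  induction p generalizing a with
  | zero => rfl
  | succ n ih =>
    rcases Nat.eq_zero_or_pos n with rfl | hn
    · rw [Nat.cast_one] at ht
      simp [bspline_one, not_lt.mpr ht]
    · rw [Nat.cast_succ, ← add_assoc] at ht
      rw [bspline_succ x hn, ih ((hx (by omega)).trans ht), ih (by rwa [add_right_comm]),
        mul_zero, mul_zero, add_zero]

theorem bspline_nonneg (hx : Monotone x) (p : ℕ) (a : ℤ) (t : ℝ) :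
    0 ≤ Bspline x p (a + (p / 2 : ℕ)) t := by
  induction p generalizing a with
  | zero => rfl
  | succ n ih =>
    rcases Nat.eq_zero_or_pos n with rfl | hn
    · rw [bspline_one]; positivity
    · rw [bspline_succ x hn]
      have h_left : 0 ≤ (t - x a) / (x (a + n) - x a) * Bspline x n (a + (n / 2 : ℕ)) t := by
        rcases lt_or_ge t (x a) with ht | ht
        · rw [bspline_eq_zero_of_lt hx n ht, mul_zero]
        · exact mul_nonneg (div_nonneg (sub_nonneg.2 ht) (sub_nonneg.2 (hx (by omega)))) (ih a)
      have h_right : 0 ≤ (x (a + n + 1) - t) / (x (a + n + 1) - x (a + 1)) *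
          Bspline x n (a + 1 + (n / 2 : ℕ)) t := by
        rcases le_or_gt (x (a + n + 1)) t with ht | ht
        · rw [bspline_eq_zero_of_le hx n (by rwa [add_right_comm]), mul_zero]
        · exact mul_nonneg (div_nonneg (sub_nonneg.2 ht.le) (sub_nonneg.2 (hx (by omega))))
            (ih (a + 1))
      exact add_nonneg h_left h_right

theorem bspline_pos_of_mem_Ioo (hx : Monotone x) {p : ℕ} (hp : 1 ≤ p) {a : ℤ} {t : ℝ}
    (ht : t ∈ Ioo (x a) (x (a + 1))) : 0 < Bspline x p (a + (p / 2 : ℕ)) t := by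
  induction p, hp using Nat.le_induction with
  | base => simp [bspline_one, ht.1.le, ht.2]
  | succ n hn ih =>
    rw [bspline_succ x hn]
    have h_coeff : 0 < (t - x a) / (x (a + n) - x a) :=
      div_pos (sub_pos.2 ht.1) (sub_pos.2 (ht.1.trans (ht.2.trans_le (hx (by omega)))))
    have h_right : 0 ≤ (x (a + n + 1) - t) / (x (a + n + 1) - x (a + 1)) *
        Bspline x n (a + 1 + (n / 2 : ℕ)) t :=
      mul_nonneg (div_nonneg (sub_nonneg.2 (ht.2.le.trans (hx (by omega))))
        (sub_nonneg.2 (hx (by omega)))) (bspline_nonneg hx n (a + 1) t)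
    exact add_pos_of_pos_of_nonneg (mul_pos h_coeff ih) h_right

end Bspline

/-- the B-splines of order `p` are linearly independent: any
finitely supported family of coefficients `c` whose B-spline combination
vanishes identically must be zero. -/
theorem bspline_linearIndependent
    (x : ℤ → ℝ) (hx : StrictMono x) (p : ℕ) (hp : 1 ≤ p)
    (c : ℤ → ℝ) (hc : (Function.support c).Finite)
    (h : ∀ t : ℝ, ∑ᶠ k : ℤ, c k * Bspline x p k t = 0) :
    ∀ k : ℤ, c k = 0 := by
  refine eq_zero_of_finsum_mul_eq_zero_of_triangular (Bspline x p) c hc (fun k => ?_) h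
  obtain ⟨t, ht⟩ := nonempty_Ioo.2 (hx (lt_add_one (k - (p / 2 : ℕ))))
  refine ⟨t, ?_, fun j hkj => ?_⟩
  · rw [← sub_add_cancel k (p / 2 : ℕ)]
    exact (bspline_pos_of_mem_Ioo hx.monotone hp ht).ne'
  · rw [← sub_add_cancel j (p / 2 : ℕ)]
    exact bspline_eq_zero_of_lt hx.monotone p (ht.2.trans_le (hx.monotone (by omega)))
end

section
/- Let p ≥ 2. On every open interval (x_m, x_{m+1}) between consecutive knots, the B-spline φ_k^[p] is differentiable and its derivative satisfies (d/dt) φ_k^[p](t) = (p−1)·[ φ_{k−1+r}^[p−1](t) / (x_{k+⌈p/2⌉−1} − x_{k−⌊p/2⌋}) − φ_{k+r}^[p−1](t) / (x_{k+⌈p/2⌉} − x_{k−⌊p/2⌋+1}) ], where r = p − 2⌊p/2⌋. -/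
/-!
Indexed by their leftmost knot, the B-splines obey the Cox–de Boor recursion
`N_{n+2,i} = w_i N_{n+1,i} + (1 - w_{i+1}) N_{n+1,i+1}` with affine weights. By induction on the
order: the order-1 splines are locally constant between knots, and in the product rule applied to
the recursion the derivative terms recombine because the divided differences
`N_{n,i} / (x_{i+n} - x_i) - N_{n,i+1} / (x_{i+n+1} - x_{i+1})` satisfy the same recursion,
with the same weights, as the B-splines themselves.
-/

open Filter Topology Set

/-- `leftKnotBspline x n i` is the B-spline of order `n` supported on `[x i, x (i + n)]`: the
paper indexes B-splines by a central knot, this recursion by the leftmost one. -/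
noncomputable def leftKnotBspline (x : ℤ → ℝ) : ℕ → ℤ → ℝ → ℝ
  | 0, _, _ => 0
  | 1, i, t => if x i ≤ t ∧ t < x (i + 1) then 1 else 0
  | n + 2, i, t =>
      (t - x i) / (x (i + n + 1) - x i) * leftKnotBspline x (n + 1) i t +
      (x (i + n + 2) - t) / (x (i + n + 2) - x (i + 1)) * leftKnotBspline x (n + 1) (i + 1) t

theorem Bspline_eq_leftKnotBspline (x : ℤ → ℝ) :
    ∀ (n : ℕ) (k : ℤ), Bspline x n k = leftKnotBspline x n (k - (n / 2 : ℕ))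
  | 0, _ => rfl
  | 1, k => by funext t; simp [Bspline, leftKnotBspline]
  | n + 2, k => by
    funext t
    rw [Bspline, leftKnotBspline, Bspline_eq_leftKnotBspline x (n + 1),
      Bspline_eq_leftKnotBspline x (n + 1)]
    have h₁ : k - 1 + ((n + 2) % 2 : ℕ) - ((n + 1) / 2 : ℕ) = k - ((n + 2) / 2 : ℕ) := by omega
    have h₂ : k + ((n + 2) % 2 : ℕ) - ((n + 1) / 2 : ℕ) = k - ((n + 2) / 2 : ℕ) + 1 := by omega
    have h₃ : k + ((n + 3) / 2 : ℕ) - 1 = k - ((n + 2) / 2 : ℕ) + n + 1 := by omega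
    have h₄ : k + ((n + 3) / 2 : ℕ) = k - ((n + 2) / 2 : ℕ) + n + 2 := by omega
    rw [h₁, h₂, h₃, h₄]

section leftKnotBspline

variable {x : ℤ → ℝ}

theorem leftKnotBspline_one_of_mem_Ioo (hx : StrictMono x) {m : ℤ} {t : ℝ}
    (ht : t ∈ Ioo (x m) (x (m + 1))) (i : ℤ) :
    leftKnotBspline x 1 i t = if i = m then 1 else 0 := by
  have : x i ≤ t ∧ t < x (i + 1) ↔ i = m := by
    constructor
    · rintro ⟨hit, hti⟩
      have := hx.lt_iff_lt.mp (hit.trans_lt ht.2)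
      have := hx.lt_iff_lt.mp (ht.1.trans hti)
      omega
    · rintro rfl
      exact ⟨ht.1.le, ht.2⟩
  simp only [leftKnotBspline, this]

theorem hasDerivAt_leftKnotBspline_succ_succ {n : ℕ} {i : ℤ} {t a b : ℝ}
    (ha : HasDerivAt (leftKnotBspline x (n + 1) i) a t)
    (hb : HasDerivAt (leftKnotBspline x (n + 1) (i + 1)) b t) :
    HasDerivAt (leftKnotBspline x (n + 2) i)
      (leftKnotBspline x (n + 1) i t / (x (i + n + 1) - x i) +
          (t - x i) / (x (i + n + 1) - x i) * a -
        leftKnotBspline x (n + 1) (i + 1) t / (x (i + n + 2) - x (i + 1)) +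
          (x (i + n + 2) - t) / (x (i + n + 2) - x (i + 1)) * b) t := by
  have hl := (((hasDerivAt_id t).sub_const (x i)).div_const (x (i + n + 1) - x i)).mul ha
  have hr := (((hasDerivAt_id t).const_sub (x (i + n + 2))).div_const
    (x (i + n + 2) - x (i + 1))).mul hb
  exact (hl.add hr).congr_deriv (by simp only [id]; ring)

theorem leftKnotBspline_div_sub_div (hx : StrictMono x) (n : ℕ) (i : ℤ) (t : ℝ) :
    leftKnotBspline x (n + 2) i t / (x (i + n + 2) - x i) -
        leftKnotBspline x (n + 2) (i + 1) t / (x (i + n + 3) - x (i + 1)) =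
      (t - x i) / (x (i + n + 2) - x i) *
          (leftKnotBspline x (n + 1) i t / (x (i + n + 1) - x i) -
            leftKnotBspline x (n + 1) (i + 1) t / (x (i + n + 2) - x (i + 1))) +
        (x (i + n + 3) - t) / (x (i + n + 3) - x (i + 1)) *
          (leftKnotBspline x (n + 1) (i + 1) t / (x (i + n + 2) - x (i + 1)) -
            leftKnotBspline x (n + 1) (i + 2) t / (x (i + n + 3) - x (i + 2))) := by
  have hsub : ∀ {a b : ℤ}, a < b → x b - x a ≠ 0 := fun h => sub_ne_zero.mpr (hx h).ne'
  have h₁ := hsub (a := i) (b := i + n + 1) (by omega)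
  have h₂ := hsub (a := i) (b := i + n + 2) (by omega)
  have h₃ := hsub (a := i + 1) (b := i + n + 2) (by omega)
  have h₄ := hsub (a := i + 1) (b := i + n + 3) (by omega)
  have h₅ := hsub (a := i + 2) (b := i + n + 3) (by omega)
  simp only [leftKnotBspline]
  rw [show i + 1 + n + 1 = i + n + 2 by ring, show i + 1 + n + 2 = i + n + 3 by ring,
    show i + 1 + 1 = i + 2 by ring]
  field_simp
  ring

theorem hasDerivAt_leftKnotBspline (hx : StrictMono x) {m : ℤ} {t : ℝ}
    (ht : t ∈ Ioo (x m) (x (m + 1))) (n : ℕ) (i : ℤ) :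
    HasDerivAt (leftKnotBspline x (n + 1) i)
      (n * (leftKnotBspline x n i t / (x (i + n) - x i) -
        leftKnotBspline x n (i + 1) t / (x (i + n + 1) - x (i + 1)))) t := by
  induction n generalizing i with
  | zero =>
    have hconst : leftKnotBspline x 1 i =ᶠ[𝓝 t] fun _ => if i = m then 1 else 0 := by
      filter_upwards [isOpen_Ioo.mem_nhds ht] with s hs
      exact leftKnotBspline_one_of_mem_Ioo hx hs i
    simpa using (hasDerivAt_const t _).congr_of_eventuallyEq hconst
  | succ n ih =>
    convert hasDerivAt_leftKnotBspline_succ_succ (ih i) (ih (i + 1)) using 1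
    rcases n with _ | n
    · simp [leftKnotBspline, add_assoc]
    · push_cast
      linear_combination (norm := ring_nf) (n + 1 : ℝ) * leftKnotBspline_div_sub_div hx n i t

end leftKnotBspline

/-- on every open interval between consecutive knots, the
derivative of the B-spline of order `p ≥ 2` is given by the difference formula
of Lemma 1 of the paper, with `r = p - 2⌊p/2⌋ = p % 2`. -/
theorem bspline_hasDerivAt
    (x : ℤ → ℝ) (hx : StrictMono x) (p : ℕ) (hp : 2 ≤ p) (k m : ℤ)
    (t : ℝ) (ht : t ∈ Set.Ioo (x m) (x (m + 1))) :
    HasDerivAt (Bspline x p k)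
      (((p : ℝ) - 1) *
        (Bspline x (p - 1) (k - 1 + ((p % 2 : ℕ) : ℤ)) t /
            (x (k + ((p + 1) / 2 : ℕ) - 1) - x (k - (p / 2 : ℕ))) -
          Bspline x (p - 1) (k + ((p % 2 : ℕ) : ℤ)) t /
            (x (k + ((p + 1) / 2 : ℕ)) - x (k - (p / 2 : ℕ) + 1)))) t := by
  obtain ⟨n, rfl⟩ : ∃ n, p = n + 2 := ⟨p - 2, by omega⟩
  set i : ℤ := k - ((n + 2) / 2 : ℕ)
  have h₁ : k - 1 + ((n + 2) % 2 : ℕ) - ((n + 1) / 2 : ℕ) = i := by omega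
  have h₂ : k + ((n + 2) % 2 : ℕ) - ((n + 1) / 2 : ℕ) = i + 1 := by omega
  have h₃ : k + ((n + 2 + 1) / 2 : ℕ) - 1 = i + (n + 1 : ℕ) := by omega
  have h₄ : k + ((n + 2 + 1) / 2 : ℕ) = i + (n + 1 : ℕ) + 1 := by omega
  rw [Bspline_eq_leftKnotBspline, show n + 2 - 1 = n + 1 from rfl, Bspline_eq_leftKnotBspline,
    Bspline_eq_leftKnotBspline, h₁, h₂, h₃, h₄]
  convert hasDerivAt_leftKnotBspline hx ht (n + 1) i using 1
  push_cast
  ring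
end

section
/- Let p ≥ 2 and let s : ℤ → ℝ be a finitely supported family of coefficients. Set f(t) = Σ_{k∈ℤ} s_k φ_k^[p](t). Then on every open interval (x_m, x_{m+1}) between consecutive knots, f is differentiable with f'(t) = (p−1) · Σ_{k∈ℤ} ((s_k − s_{k−1}) / (x_{k+⌈p/2⌉−1} − x_{k−⌊p/2⌋})) · φ_{k−r'}^[p−1](t), where r' = 1 − (p − 2⌊p/2⌋). -/
open Set Function

theorem finsum_int_by_parts {R : Type*} [CommRing R] {s : ℤ → R} (hs : (support s).Finite)
    (G : ℤ → R) :
    ∑ᶠ k, s k * (G k - G (k + 1)) = ∑ᶠ k, (s k - s (k - 1)) * G k := by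
  have hs' : (support fun k => s (k - 1)).Finite := hs.preimage sub_left_injective.injOn
  have shift : ∑ᶠ k, s k * G (k + 1) = ∑ᶠ k, s (k - 1) * G k := by
    simpa using finsum_comp_equiv (Equiv.addRight (1 : ℤ)) (f := fun k => s (k - 1) * G k)
  simp only [mul_sub, sub_mul]
  rw [finsum_sub_distrib (hs.subset (support_mul_subset_left _ _))
      (hs.subset (support_mul_subset_left _ _)),
    finsum_sub_distrib (hs.subset (support_mul_subset_left _ _))
      (hs'.subset (support_mul_subset_left _ _)), shift]

theorem hasDerivAt_finsum_mul {ι 𝕜 : Type*} [NontriviallyNormedField 𝕜] {s : ι → 𝕜}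
    (hs : (support s).Finite) {F : ι → 𝕜 → 𝕜} {F' : ι → 𝕜} {t : 𝕜}
    (hF : ∀ k, HasDerivAt (F k) (F' k) t) :
    HasDerivAt (fun u => ∑ᶠ k, s k * F k u) (∑ᶠ k, s k * F' k) t := by
  have hsum : ∀ g : ι → 𝕜, ∑ᶠ k, s k * g k = ∑ k ∈ hs.toFinset, s k * g k := fun g =>
    finsum_eq_sum_of_support_subset _ fun k hk => hs.mem_toFinset.2 (left_ne_zero_of_mul hk)
  simp only [hsum]
  exact HasDerivAt.fun_sum fun k _ => (hF k).const_mul (s k)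

noncomputable def leftBspline (x : ℤ → ℝ) (q : ℕ) (i : ℤ) : ℝ → ℝ :=
  Bspline x q (i + (q / 2 : ℕ))

theorem Bspline_eq_leftBspline (x : ℤ → ℝ) (q : ℕ) (k : ℤ) :
    Bspline x q k = leftBspline x q (k - (q / 2 : ℕ)) := by
  simp [leftBspline]

theorem leftBspline_succ_succ (x : ℤ → ℝ) (q : ℕ) (i : ℤ) (t : ℝ) :
    leftBspline x (q + 2) i t =
      (t - x i) / (x (i + q + 1) - x i) * leftBspline x (q + 1) i t +
      (x (i + q + 2) - t) / (x (i + q + 2) - x (i + 1)) * leftBspline x (q + 1) (i + 1) t := by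
  simp only [leftBspline, Bspline]
  have h1 : i + ((q + 2) / 2 : ℕ) - ((q + 2) / 2 : ℕ) = i := by omega
  have h2 : i + ((q + 2) / 2 : ℕ) + ((q + 3) / 2 : ℕ) - 1 = i + q + 1 := by omega
  have h3 : i + ((q + 2) / 2 : ℕ) + ((q + 3) / 2 : ℕ) = i + q + 2 := by omega
  have h4 : i + ((q + 2) / 2 : ℕ) - 1 + ((q + 2) % 2 : ℕ) = i + ((q + 1) / 2 : ℕ) := by omega
  have h5 : i + ((q + 2) / 2 : ℕ) + ((q + 2) % 2 : ℕ) = i + 1 + ((q + 1) / 2 : ℕ) := by omega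
  rw [h1, h2, h3, h4, h5]

theorem leftBspline_one_of_mem_Ioo {x : ℤ → ℝ} (hx : StrictMono x) {m : ℤ} {u : ℝ}
    (hu : u ∈ Ioo (x m) (x (m + 1))) (i : ℤ) : leftBspline x 1 i u = if i = m then 1 else 0 := by
  have : x i ≤ u ∧ u < x (i + 1) ↔ i = m := by
    constructor
    · rintro ⟨hiu, hui⟩
      have := hx.lt_iff_lt.1 (hiu.trans_lt hu.2)
      have := hx.lt_iff_lt.1 (hu.1.trans hui)
      omega
    · rintro rfl
      exact ⟨hu.1.le, hu.2⟩
  simp only [leftBspline, Bspline, Nat.reduceDiv, CharP.cast_eq_zero, add_zero]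
  exact if_congr this rfl rfl

theorem hasDerivAt_leftBspline_two {x : ℤ → ℝ} (hx : StrictMono x) {m : ℤ} {t : ℝ}
    (ht : t ∈ Ioo (x m) (x (m + 1))) (i : ℤ) :
    HasDerivAt (leftBspline x 2 i)
      (leftBspline x 1 i t / (x (i + 1) - x i)
        - leftBspline x 1 (i + 1) t / (x (i + 2) - x (i + 1))) t := by
  have affine : HasDerivAt (fun u => (u - x i) / (x (i + 1) - x i) * leftBspline x 1 i t +
      (x (i + 2) - u) / (x (i + 2) - x (i + 1)) * leftBspline x 1 (i + 1) t)
      (1 / (x (i + 1) - x i) * leftBspline x 1 i t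
        + (0 - 1) / (x (i + 2) - x (i + 1)) * leftBspline x 1 (i + 1) t) t :=
    ((((hasDerivAt_id t).sub_const _).div_const _).mul_const _).add
      ((((hasDerivAt_const t _).sub (hasDerivAt_id t)).div_const _).mul_const _)
  have locally_affine : leftBspline x 2 i =ᶠ[nhds t] fun u =>
      (u - x i) / (x (i + 1) - x i) * leftBspline x 1 i t +
      (x (i + 2) - u) / (x (i + 2) - x (i + 1)) * leftBspline x 1 (i + 1) t := by
    filter_upwards [isOpen_Ioo.mem_nhds ht] with u hu
    rw [leftBspline_succ_succ, leftBspline_one_of_mem_Ioo hx hu, leftBspline_one_of_mem_Ioo hx hu,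
      leftBspline_one_of_mem_Ioo hx ht, leftBspline_one_of_mem_Ioo hx ht]
    norm_num
  exact (affine.congr_of_eventuallyEq locally_affine).congr_deriv (by ring)

theorem hasDerivAt_leftBspline {x : ℤ → ℝ} (hx : StrictMono x) {m : ℤ} {t : ℝ}
    (ht : t ∈ Ioo (x m) (x (m + 1))) (q : ℕ) (i : ℤ) :
    HasDerivAt (leftBspline x (q + 2) i)
      ((q + 1) * (leftBspline x (q + 1) i t / (x (i + q + 1) - x i)
        - leftBspline x (q + 1) (i + 1) t / (x (i + q + 2) - x (i + 1)))) t := by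
  induction q generalizing i with
  | zero => simpa using hasDerivAt_leftBspline_two hx ht i
  | succ q ih =>
    have hne : ∀ {a b : ℤ}, a < b → x b - x a ≠ 0 := fun h => sub_ne_zero.2 (hx h).ne'
    have recursion : leftBspline x (q + 3) i = fun u =>
        ((u - x i) / (x (i + q + 2) - x i) * leftBspline x (q + 2) i u +
        (x (i + q + 3) - u) / (x (i + q + 3) - x (i + 1)) * leftBspline x (q + 2) (i + 1) u) := by
      funext u
      rw [leftBspline_succ_succ]
      push_cast
      ring_nf
    have product_rule := ((((hasDerivAt_id t).sub_const (x i)).div_const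
      (x (i + q + 2) - x i)).mul (ih i)).add
      ((((hasDerivAt_const t (x (i + q + 3))).sub (hasDerivAt_id t)).div_const
        (x (i + q + 3) - x (i + 1))).mul (ih (i + 1)))
    rw [recursion]
    refine product_rule.congr_deriv ?_
    rw [leftBspline_succ_succ x q i t, leftBspline_succ_succ x q (i + 1) t]
    simp only [id, Pi.sub_apply, Nat.cast_add, Nat.cast_one]
    rw [show i + 1 + q + 1 = i + q + 2 by ring, show i + 1 + q + 2 = i + q + 3 by ring,
      show i + 1 + 1 = i + 2 by ring, show i + (q + 1) + 1 = i + q + 2 by ring,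
      show i + (q + 1) + 2 = i + q + 3 by ring]
    have := hne (show i < i + q + 1 by omega)
    have := hne (show i < i + q + 2 by omega)
    have := hne (show i + 1 < i + q + 2 by omega)
    have := hne (show i + 1 < i + q + 3 by omega)
    have := hne (show i + 2 < i + q + 3 by omega)
    field_simp
    ring

/-- derivative of a finitely supported B-spline combination: on
each open interval between consecutive knots, `f = ∑ₖ sₖ φ_k^[p]` is
differentiable with derivative
`(p-1) ∑ₖ ((sₖ - s_{k-1})/(x_{k+⌈p/2⌉-1} - x_{k-⌊p/2⌋})) φ_{k-r'}^[p-1]`,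
where `r' = 1 - (p % 2)`. -/
theorem bspline_combination_hasDerivAt
    (x : ℤ → ℝ) (hx : StrictMono x) (p : ℕ) (hp : 2 ≤ p)
    (s : ℤ → ℝ) (hs : (Function.support s).Finite) (m : ℤ) (t : ℝ)
    (ht : t ∈ Set.Ioo (x m) (x (m + 1))) :
    HasDerivAt (fun u : ℝ => ∑ᶠ k : ℤ, s k * Bspline x p k u)
      (((p : ℝ) - 1) * ∑ᶠ k : ℤ,
        ((s k - s (k - 1)) / (x (k + ((p + 1) / 2 : ℕ) - 1) - x (k - (p / 2 : ℕ)))) *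
          Bspline x (p - 1) (k - (1 - ((p % 2 : ℕ) : ℤ))) t) t := by
  obtain ⟨q, rfl⟩ : ∃ q, p = q + 2 := ⟨p - 2, by omega⟩
  set c : ℤ := (((q + 2) / 2 : ℕ) : ℤ)
  set G : ℤ → ℝ := fun k => leftBspline x (q + 1) (k - c) t / (x (k - c + q + 1) - x (k - c))
  have hF : ∀ k, HasDerivAt (Bspline x (q + 2) k) ((q + 1) * (G k - G (k + 1))) t := by
    intro k
    have h := hasDerivAt_leftBspline hx ht q (k - c)
    rw [show k - c + 1 = k + 1 - c by ring, show k - c + q + 2 = k + 1 - c + q + 1 by ring] at h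
    rwa [Bspline_eq_leftBspline]
  refine (hasDerivAt_finsum_mul hs hF).congr_deriv ?_
  simp only [mul_left_comm (s _), ← mul_finsum, finsum_int_by_parts hs]
  congr 1
  · push_cast
    ring
  refine finsum_congr fun k => ?_
  have parity_shift : k - (1 - ((q + 2) % 2 : ℕ)) - ((q + 1) / 2 : ℕ) = k - c := by omega
  have ceil_add_floor : k + ((q + 2 + 1) / 2 : ℕ) - 1 = k - c + q + 1 := by omega
  rw [show q + 2 - 1 = q + 1 from rfl, Bspline_eq_leftBspline, parity_shift, ceil_add_floor]
  ring
end

section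
/- Partition of unity: for every integer p ≥ 1 and every t ∈ ℝ, the (finitely supported) sum of all B-splines of order p satisfies Σ_{k∈ℤ} φ_k^[p](t) = 1. -/
open Function

theorem finsum_comp_add_right {M : Type*} [AddCommMonoid M] (f : ℤ → M) (c : ℤ) :
    ∑ᶠ k, f (k + c) = ∑ᶠ k, f k :=
  finsum_comp_equiv (Equiv.addRight c)

theorem StrictMono.exists_le_lt_succ {x : ℤ → ℝ} (hx : StrictMono x)
    (htop : Filter.Tendsto x Filter.atTop Filter.atTop)
    (hbot : Filter.Tendsto x Filter.atBot Filter.atBot) (t : ℝ) :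
    ∃ k, x k ≤ t ∧ t < x (k + 1) := by
  obtain ⟨a, ha⟩ := (hbot.eventually (Filter.eventually_le_atBot t)).exists
  obtain ⟨b, hb⟩ := (htop.eventually (Filter.eventually_gt_atTop t)).exists
  obtain ⟨k, hk, hmax⟩ := Int.exists_greatest_of_bdd (P := fun k => x k ≤ t)
    ⟨b, fun k hk => (hx.lt_iff_lt.1 (hk.trans_lt hb)).le⟩ ⟨a, ha⟩
  exact ⟨k, hk, lt_of_not_ge fun h => by linarith [hmax (k + 1) h]⟩

namespace Bspline

variable (x : ℤ → ℝ)

/-- Relative position of `t` in `[x (j - ⌊p/2⌋), x (j + ⌈p/2⌉))`, the support of `Bspline x p j`. -/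
noncomputable def weight (p : ℕ) (j : ℤ) (t : ℝ) : ℝ :=
  (t - x (j - (p / 2 : ℕ))) / (x (j + ((p + 1) / 2 : ℕ)) - x (j - (p / 2 : ℕ)))

theorem mem_Ico_of_ne_zero (hx : Monotone x) {p : ℕ} {k : ℤ} {t : ℝ} (h : Bspline x p k t ≠ 0) :
    t ∈ Set.Ico (x (k - (p / 2 : ℕ))) (x (k + ((p + 1) / 2 : ℕ))) := by
  induction p, k, t using Bspline.induct x with
  | case1 => simp [Bspline] at h
  | case2 k t hk => simpa using hk
  | case3 k t hk => simp [Bspline, hk] at h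
  | case4 p k t ih₁ ih₂ =>
    have hB : Bspline x (p + 1) (k - 1 + ((p + 2) % 2 : ℕ)) t ≠ 0 ∨
        Bspline x (p + 1) (k + ((p + 2) % 2 : ℕ)) t ≠ 0 := by
      by_contra! hB
      rw [Bspline, hB.1, hB.2, mul_zero, mul_zero, add_zero] at h
      exact h rfl
    rcases hB with hB | hB
    · exact Set.Ico_subset_Ico (hx (by omega)) (hx (by omega)) (ih₁ hB)
    · exact Set.Ico_subset_Ico (hx (by omega)) (hx (by omega)) (ih₂ hB)

theorem succ_succ_eq (hx : Injective x) (p : ℕ) (k : ℤ) (t : ℝ) :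
    Bspline x (p + 2) k t =
      weight x (p + 1) (k + ((p % 2 : ℕ) - 1)) t * Bspline x (p + 1) (k + ((p % 2 : ℕ) - 1)) t +
      (1 - weight x (p + 1) (k + (p % 2 : ℕ)) t) * Bspline x (p + 1) (k + (p % 2 : ℕ)) t := by
  have e₁ : k - 1 + ((p + 2) % 2 : ℕ) = k + ((p % 2 : ℕ) - 1) := by omega
  have e₂ : k + ((p + 2) % 2 : ℕ) = k + (p % 2 : ℕ) := by omega
  have e₃ : k + ((p % 2 : ℕ) - 1) - ((p + 1) / 2 : ℕ) = k - ((p + 2) / 2 : ℕ) := by omega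
  have e₄ : k + ((p % 2 : ℕ) - 1) + ((p + 1 + 1) / 2 : ℕ) = k + ((p + 3) / 2 : ℕ) - 1 := by omega
  have e₅ : k + (p % 2 : ℕ) + ((p + 1 + 1) / 2 : ℕ) = k + ((p + 3) / 2 : ℕ) := by omega
  have e₆ : k + (p % 2 : ℕ) - ((p + 1) / 2 : ℕ) = k - ((p + 2) / 2 : ℕ) + 1 := by omega
  have hne : x (k + ((p + 3) / 2 : ℕ)) - x (k - ((p + 2) / 2 : ℕ) + 1) ≠ 0 :=
    sub_ne_zero.2 (hx.ne (by omega))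
  rw [Bspline, weight, weight, e₁, e₂, e₃, e₄, e₅, e₆, one_sub_div hne, sub_sub_sub_cancel_right]

theorem support_subset_Ioc (hx : StrictMono x) {k₀ : ℤ} {t : ℝ} (h₀ : x k₀ ≤ t)
    (h₁ : t < x (k₀ + 1)) (p : ℕ) :
    support (fun k => Bspline x p k t) ⊆ Set.Ioc (k₀ - ((p + 1) / 2 : ℕ)) (k₀ + (p / 2 : ℕ)) := by
  intro k hk
  obtain ⟨hl, hr⟩ := mem_Ico_of_ne_zero x hx.monotone hk
  have := hx.lt_iff_lt.1 (h₀.trans_lt hr)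
  have := hx.lt_iff_lt.1 (hl.trans_lt h₁)
  constructor <;> omega

theorem hasFiniteSupport (hx : StrictMono x) {k₀ : ℤ} {t : ℝ} (h₀ : x k₀ ≤ t)
    (h₁ : t < x (k₀ + 1)) (p : ℕ) : HasFiniteSupport fun k => Bspline x p k t :=
  (Set.finite_Ioc _ _).subset (support_subset_Ioc x hx h₀ h₁ p)

theorem finsum_eq_one (hx : StrictMono x) {k₀ : ℤ} {t : ℝ} (h₀ : x k₀ ≤ t)
    (h₁ : t < x (k₀ + 1)) (p : ℕ) : ∑ᶠ k, Bspline x (p + 1) k t = 1 := by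
  induction p with
  | zero =>
    rw [finsum_eq_single _ k₀ fun k hk => ?_]
    · simp [Bspline, h₀, h₁]
    · by_contra h
      obtain ⟨hl, hr⟩ := support_subset_Ioc x hx h₀ h₁ 1 h
      omega
  | succ p ih =>
    have hB := hasFiniteSupport x hx h₀ h₁ (p + 1)
    set r : ℤ := ((p % 2 : ℕ) : ℤ)
    set f := fun j => weight x (p + 1) j t * Bspline x (p + 1) j t
    set g := fun j => (1 - weight x (p + 1) j t) * Bspline x (p + 1) j t
    have hf : HasFiniteSupport f := hB.fun_mul_right _
    have hg : HasFiniteSupport g := hB.fun_mul_right _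
    calc ∑ᶠ k, Bspline x (p + 2) k t
        = ∑ᶠ k, (f (k + (r - 1)) + g (k + r)) :=
          finsum_congr fun k => succ_succ_eq x hx.injective p k t
      _ = ∑ᶠ k, f (k + (r - 1)) + ∑ᶠ k, g (k + r) :=
          finsum_add_distrib (hf.fun_comp_of_injective (add_left_injective _))
            (hg.fun_comp_of_injective (add_left_injective _))
      _ = ∑ᶠ j, (f j + g j) := by
          rw [finsum_comp_add_right, finsum_comp_add_right, finsum_add_distrib hf hg]
      _ = ∑ᶠ j, Bspline x (p + 1) j t := finsum_congr fun j => by simp only [f, g]; ring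
      _ = 1 := ih

end Bspline

/-- partition of unity: for every order `p ≥ 1` and every `t ∈ ℝ`,
only finitely many B-splines are nonzero at `t` and their sum equals `1`. -/
theorem bspline_partition_of_unity
    (x : ℤ → ℝ) (hx : StrictMono x)
    (htop : Filter.Tendsto x Filter.atTop Filter.atTop)
    (hbot : Filter.Tendsto x Filter.atBot Filter.atBot)
    (p : ℕ) (hp : 1 ≤ p) (t : ℝ) :
    {k : ℤ | Bspline x p k t ≠ 0}.Finite ∧
    ∑ᶠ k : ℤ, Bspline x p k t = 1 := by
  obtain ⟨k₀, h₀, h₁⟩ := hx.exists_le_lt_succ htop hbot t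
  obtain ⟨n, rfl⟩ := Nat.exists_eq_add_of_le' hp
  exact ⟨Bspline.hasFiniteSupport x hx h₀ h₁ (n + 1), Bspline.finsum_eq_one x hx h₀ h₁ n⟩
end

section
/- Reproduction of power functions: for every integer p ≥ 2, every q ∈ {0, 1, …, p−1} and every t ∈ ℝ, one has t^q = Σ_{k∈ℤ} x̃_k^{[p,q]} φ_k^[p](t), where the sum has only finitely many nonzero terms. -/
/-- The power coefficient `x̃_k^{[p,q]}`: the elementary symmetric polynomial of
degree `q` in the `p-1` knots `x_{k+1-⌊p/2⌋}, …, x_{k+⌈p/2⌉-1}`, divided by the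
binomial coefficient `C(p-1, q)`. -/
noncomputable def powerCoef (x : ℤ → ℝ) (p q : ℕ) (k : ℤ) : ℝ :=
  (((Finset.Icc (k + 1 - (p / 2 : ℕ)) (k + ((p + 1) / 2 : ℕ) - 1)).val.map x).esymm q) /
    (Nat.choose (p - 1) q)

/-! Marsden's identity: if `x m ≤ t < x (m + 1)`, then
`∑ₗ N_{l,n}(t) ∏_{i=1}^{n} (X - x_{l+i}) = (X - t)^n` as polynomials, where `N_{l,n}` is the
B-spline of degree `n` with knots `x_l, …, x_{l+n+1}`. It follows by induction on `n` from the
Cox–de Boor recursion, since `X - t` is the linear interpolation of `X - x_l` and `X - x_{l+n+1}`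
with the weights of that recursion. Comparing the coefficients of `X^(n-q)` gives
`t^q = ∑ₗ e_q(x_{l+1}, …, x_{l+n}) / C(n, q) · N_{l,n}(t)`. -/

open Polynomial Finset Function

/-- B-splines of degree `n` indexed by their leftmost knot `x l`, whereas `Bspline` indexes them by
a central knot. -/
noncomputable def coxDeBoor (x : ℤ → ℝ) : ℕ → ℤ → ℝ → ℝ
  | 0, l, t => if x l ≤ t ∧ t < x (l + 1) then 1 else 0
  | n + 1, l, t =>
      (t - x l) / (x (l + n + 1) - x l) * coxDeBoor x n l t +
        (x (l + n + 2) - t) / (x (l + n + 2) - x (l + 1)) * coxDeBoor x n (l + 1) t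

theorem Bspline_succ_eq_coxDeBoor (x : ℤ → ℝ) (n : ℕ) (k : ℤ) (t : ℝ) :
    Bspline x (n + 1) k t = coxDeBoor x n (k - ((n + 1) / 2 : ℕ)) t := by
  induction n generalizing k with
  | zero => simp [Bspline, coxDeBoor]
  | succ n ih =>
    set l : ℤ := k - ((n + 2) / 2 : ℕ)
    have h₁ : k - 1 + ((n + 2) % 2 : ℕ) - ((n + 1) / 2 : ℕ) = l := by omega
    have h₂ : k + ((n + 2) % 2 : ℕ) - ((n + 1) / 2 : ℕ) = l + 1 := by omega
    have h₃ : k + ((n + 3) / 2 : ℕ) - 1 = l + n + 1 := by omega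
    have h₄ : k + ((n + 3) / 2 : ℕ) = l + n + 2 := by omega
    have h₅ : k - ((n + 2) / 2 : ℕ) + 1 = l + 1 := by omega
    rw [Bspline, ih, ih, h₁, h₂, h₃, h₄, h₅, coxDeBoor]

theorem mem_Ico_of_coxDeBoor_ne_zero {x : ℤ → ℝ} (hx : Monotone x) {n : ℕ} {l : ℤ}
    {t : ℝ} (h : coxDeBoor x n l t ≠ 0) : t ∈ Set.Ico (x l) (x (l + n + 1)) := by
  induction n generalizing l with
  | zero => simpa [coxDeBoor] using h
  | succ n ih =>
    rw [coxDeBoor] at h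
    rcases ne_or_eq (coxDeBoor x n l t) 0 with hl | hl
    · obtain ⟨h₁, h₂⟩ := ih hl
      exact ⟨h₁, h₂.trans_le (hx (by omega))⟩
    · have hr : coxDeBoor x n (l + 1) t ≠ 0 := by
        rintro hr
        simp [hl, hr] at h
      obtain ⟨h₁, h₂⟩ := ih hr
      exact ⟨(hx (by omega)).trans h₁, h₂.trans_le (hx (by push_cast; omega))⟩

theorem exists_le_lt_succ_of_tendsto {x : ℤ → ℝ}
    (htop : Filter.Tendsto x Filter.atTop Filter.atTop)
    (hbot : Filter.Tendsto x Filter.atBot Filter.atBot) (t : ℝ) :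
    ∃ m, x m ≤ t ∧ t < x (m + 1) := by
  obtain ⟨N, hN⟩ := Filter.eventually_atTop.mp (htop.eventually_gt_atTop t)
  obtain ⟨M, hM⟩ := Filter.eventually_atBot.mp (hbot.eventually_lt_atBot t)
  obtain ⟨m, hm, hmax⟩ := Int.exists_greatest_of_bdd (P := fun k => x k ≤ t)
    ⟨N, fun k hk => by_contra fun h => (hN k (by omega)).not_ge hk⟩ ⟨M, (hM M le_rfl).le⟩
  exact ⟨m, hm, lt_of_not_ge fun h => by simpa using hmax _ h⟩

noncomputable def interiorKnots (x : ℤ → ℝ) (n : ℕ) (l : ℤ) : Multiset ℝ :=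
  (Icc (l + 1) (l + n)).val.map x

noncomputable def knotPoly (x : ℤ → ℝ) (n : ℕ) (l : ℤ) : ℝ[X] :=
  ((interiorKnots x n l).map fun a => X - C a).prod

theorem card_interiorKnots (x : ℤ → ℝ) (n : ℕ) (l : ℤ) :
    Multiset.card (interiorKnots x n l) = n := by
  simp [interiorKnots]

theorem powerCoef_succ (x : ℤ → ℝ) (n q : ℕ) (k : ℤ) :
    powerCoef x (n + 1) q k =
      (interiorKnots x n (k - ((n + 1) / 2 : ℕ))).esymm q / n.choose q := by
  have h₁ : k + 1 - ((n + 1) / 2 : ℕ) = k - ((n + 1) / 2 : ℕ) + 1 := by ring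
  have h₂ : k + ((n + 1 + 1) / 2 : ℕ) - 1 = k - ((n + 1) / 2 : ℕ) + n := by omega
  rw [powerCoef, interiorKnots, h₁, h₂, Nat.add_sub_cancel]

theorem knotPoly_succ (x : ℤ → ℝ) (n : ℕ) (l : ℤ) :
    knotPoly x (n + 1) l = (X - C (x (l + n + 1))) * knotPoly x n l := by
  have h : Icc (l + 1) (l + (n + 1 : ℕ)) = insert (l + n + 1) (Icc (l + 1) (l + n)) := by
    rw [insert_Icc_right_eq_Icc_add_one (by omega)]
    push_cast
    ring_nf
  rw [knotPoly, interiorKnots, h, insert_val_of_notMem (by simp), Multiset.map_cons,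
    Multiset.map_cons, Multiset.prod_cons]
  rfl

theorem knotPoly_succ_sub_one (x : ℤ → ℝ) (n : ℕ) (l : ℤ) :
    knotPoly x (n + 1) (l - 1) = (X - C (x l)) * knotPoly x n l := by
  have h : Icc (l - 1 + 1) (l - 1 + (n + 1 : ℕ)) = insert l (Icc (l + 1) (l + n)) := by
    rw [insert_Icc_add_one_left_eq_Icc (by omega)]
    push_cast
    ring_nf
  rw [knotPoly, interiorKnots, h, insert_val_of_notMem (by simp), Multiset.map_cons,
    Multiset.map_cons, Multiset.prod_cons]
  rfl

theorem coeff_knotPoly (x : ℤ → ℝ) {n q : ℕ} (hq : q ≤ n) (l : ℤ) :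
    (knotPoly x n l).coeff (n - q) = (-1) ^ q * (interiorKnots x n l).esymm q := by
  rw [knotPoly, Multiset.prod_X_sub_C_coeff _ (by rw [card_interiorKnots]; omega),
    card_interiorKnots, Nat.sub_sub_self hq]

theorem coeff_X_sub_C_pow {R : Type*} [CommRing R] (t : R) {n q : ℕ} (hq : q ≤ n) :
    ((X - C t) ^ n).coeff (n - q) = (-1) ^ q * n.choose q * t ^ q := by
  rw [sub_eq_add_neg, ← C_neg, coeff_X_add_C_pow, Nat.sub_sub_self hq, Nat.choose_symm hq,
    neg_pow]
  ring

theorem C_mul_X_sub_C_add_C_mul_X_sub_C {K : Type*} [Field K] {a b : K} (hab : a ≠ b) (t : K) :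
    C ((t - a) / (b - a)) * (X - C b) + C ((b - t) / (b - a)) * (X - C a) = X - C t := by
  have hba : b - a ≠ 0 := sub_ne_zero.mpr hab.symm
  have h₁ : (t - a) / (b - a) + (b - t) / (b - a) = 1 := by field_simp; ring
  have h₂ : (t - a) / (b - a) * b + (b - t) / (b - a) * a = t := by field_simp; ring
  calc _ = C ((t - a) / (b - a) + (b - t) / (b - a)) * X
        - C ((t - a) / (b - a) * b + (b - t) / (b - a) * a) := by
          simp only [map_add, map_mul]; ring
    _ = X - C t := by rw [h₁, h₂, C_1, one_mul]

section KnotInterval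

variable {x : ℤ → ℝ} {t : ℝ} {m : ℤ}

theorem mem_Icc_of_coxDeBoor_ne_zero (hx : StrictMono x) (hm : x m ≤ t) (hm' : t < x (m + 1))
    {n : ℕ} {l : ℤ} (h : coxDeBoor x n l t ≠ 0) : l ∈ Icc (m - n) m := by
  obtain ⟨h₁, h₂⟩ := mem_Ico_of_coxDeBoor_ne_zero hx.monotone h
  have := hx.lt_iff_lt.mp (h₁.trans_lt hm')
  have := hx.lt_iff_lt.mp (hm.trans_lt h₂)
  rw [mem_Icc]
  omega

theorem hasFiniteSupport_C_coxDeBoor_mul (hx : StrictMono x) (hm : x m ≤ t) (hm' : t < x (m + 1))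
    (n : ℕ) (d : ℤ) (g : ℤ → ℝ[X]) :
    HasFiniteSupport fun l => C (coxDeBoor x n (l + d) t) * g l := by
  refine (Set.finite_Icc (m - n - d) (m - d)).subset fun l hl => ?_
  have := mem_Icc_of_coxDeBoor_ne_zero hx hm hm' (C_ne_zero.mp (left_ne_zero_of_mul hl))
  rw [mem_Icc] at this
  rw [Set.mem_Icc]
  omega

theorem finsum_C_coxDeBoor_mul_knotPoly (hx : StrictMono x) (hm : x m ≤ t) (hm' : t < x (m + 1))
    (n : ℕ) :
    ∑ᶠ l, C (coxDeBoor x n l t) * knotPoly x n l = (X - C t) ^ n := by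
  induction n with
  | zero =>
    have hout : ∀ l ≠ m, C (coxDeBoor x 0 l t) * knotPoly x 0 l = 0 := fun l hl => by
      refine mul_eq_zero_of_left (C_eq_zero.mpr (by_contra fun h => hl ?_)) _
      simpa using mem_Icc_of_coxDeBoor_ne_zero hx hm hm' h
    rw [finsum_eq_single _ m hout]
    simp [coxDeBoor, hm, hm', knotPoly, interiorKnots]
  | succ n ih =>
    set α : ℤ → ℝ := fun l => (t - x l) / (x (l + n + 1) - x l)
    set β : ℤ → ℝ := fun l => (x (l + n + 2) - t) / (x (l + n + 2) - x (l + 1))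
    have hfin := hasFiniteSupport_C_coxDeBoor_mul hx hm hm' n
    have hshift : ∑ᶠ l, C (coxDeBoor x n (l + 1) t) * (C (β l) * knotPoly x (n + 1) l) =
        ∑ᶠ l, C (coxDeBoor x n l t) * (C (β (l - 1)) * knotPoly x (n + 1) (l - 1)) := by
      simpa using finsum_comp_equiv (Equiv.addRight (1 : ℤ))
        (f := fun l => C (coxDeBoor x n l t) * (C (β (l - 1)) * knotPoly x (n + 1) (l - 1)))
    have hinterpolate : ∀ l, C (α l) * knotPoly x (n + 1) l +
        C (β (l - 1)) * knotPoly x (n + 1) (l - 1) = (X - C t) * knotPoly x n l := fun l => by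
      have hβ : β (l - 1) = (x (l + n + 1) - t) / (x (l + n + 1) - x l) := by
        simp only [β]; ring_nf
      rw [knotPoly_succ, knotPoly_succ_sub_one, hβ, ← mul_assoc, ← mul_assoc, ← add_mul,
        C_mul_X_sub_C_add_C_mul_X_sub_C (hx (by omega)).ne]
    calc ∑ᶠ l, C (coxDeBoor x (n + 1) l t) * knotPoly x (n + 1) l
        = ∑ᶠ l, (C (coxDeBoor x n (l + 0) t) * (C (α l) * knotPoly x (n + 1) l) +
            C (coxDeBoor x n (l + 1) t) * (C (β l) * knotPoly x (n + 1) l)) := by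
          refine finsum_congr fun l => ?_
          simp only [coxDeBoor, add_zero, map_add, map_mul]
          ring
      _ = ∑ᶠ l, C (coxDeBoor x n l t) * (C (α l) * knotPoly x (n + 1) l +
            C (β (l - 1)) * knotPoly x (n + 1) (l - 1)) := by
          rw [finsum_add_distrib (hfin 0 _) (hfin 1 _), hshift, ← finsum_add_distrib]
          · simp only [add_zero, mul_add]
          · simpa using hfin 0 _
          · simpa using hfin 0 _
      _ = (X - C t) ^ (n + 1) := by
          simp only [hinterpolate, mul_left_comm _ (X - C t), ← mul_finsum, ih, pow_succ']

theorem finsum_esymm_div_choose_mul_coxDeBoor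
    (hx : StrictMono x) (hm : x m ≤ t) (hm' : t < x (m + 1))
    {n q : ℕ} (hq : q ≤ n) :
    ∑ᶠ l, (interiorKnots x n l).esymm q / n.choose q * coxDeBoor x n l t = t ^ q := by
  have hfin : HasFiniteSupport fun l => C (coxDeBoor x n l t) * knotPoly x n l := by
    simpa using hasFiniteSupport_C_coxDeBoor_mul hx hm hm' n 0 (knotPoly x n)
  have hcoeff := congrArg (lcoeff ℝ (n - q)) (finsum_C_coxDeBoor_mul_knotPoly hx hm hm' n)
  rw [map_finsum _ hfin, lcoeff_apply, coeff_X_sub_C_pow t hq] at hcoeff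
  simp only [lcoeff_apply, coeff_C_mul, coeff_knotPoly x hq] at hcoeff
  have hc : ((-1) ^ q * n.choose q : ℝ) ≠ 0 := by
    have := Nat.choose_pos hq
    positivity
  calc _ = ((-1) ^ q * n.choose q : ℝ)⁻¹ *
        ∑ᶠ l, coxDeBoor x n l t * ((-1) ^ q * (interiorKnots x n l).esymm q) := by
        rw [mul_finsum]
        exact finsum_congr fun l => by field_simp
    _ = t ^ q := by rw [hcoeff, inv_mul_cancel_left₀ hc]

end KnotInterval

/-- reproduction of power functions: for `p ≥ 2` and
`0 ≤ q ≤ p-1`, the power function `t^q` decomposes in the B-spline basis of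
order `p` with the power coefficients `x̃_k^{[p,q]}`, the sum having only
finitely many nonzero terms. -/
theorem bspline_reproduces_powers
    (x : ℤ → ℝ) (hx : StrictMono x)
    (htop : Filter.Tendsto x Filter.atTop Filter.atTop)
    (hbot : Filter.Tendsto x Filter.atBot Filter.atBot)
    (p : ℕ) (hp : 2 ≤ p) (q : ℕ) (hq : q ≤ p - 1) (t : ℝ) :
    {k : ℤ | powerCoef x p q k * Bspline x p k t ≠ 0}.Finite ∧
    t ^ q = ∑ᶠ k : ℤ, powerCoef x p q k * Bspline x p k t := by
  obtain ⟨n, rfl⟩ : ∃ n, p = n + 1 := ⟨p - 1, by omega⟩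
  obtain ⟨m, hm, hm'⟩ := exists_le_lt_succ_of_tendsto htop hbot t
  set s : ℤ := (((n + 1) / 2 : ℕ) : ℤ)
  set c : ℤ → ℝ := fun l => (interiorKnots x n l).esymm q / n.choose q * coxDeBoor x n l t
  have hterm : ∀ k, powerCoef x (n + 1) q k * Bspline x (n + 1) k t = c (k - s) := fun k => by
    rw [powerCoef_succ, Bspline_succ_eq_coxDeBoor]
  refine ⟨(Set.finite_Icc (m - n + s) (m + s)).subset fun k hk => ?_, ?_⟩
  · rw [Set.mem_ofPred_eq, hterm] at hk
    have := mem_Icc_of_coxDeBoor_ne_zero hx hm hm' (right_ne_zero_of_mul hk)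
    rw [mem_Icc] at this
    rw [Set.mem_Icc]
    omega
  · rw [finsum_congr hterm]
    exact (finsum_esymm_div_choose_mul_coxDeBoor hx hm hm' (by omega)).symm.trans
      (finsum_comp_equiv (Equiv.subRight s)).symm
end

section
/- Recursion for the power coefficients: for every integer p ≥ 2, every q ∈ {1, …, p−1} and every k ∈ ℤ, the power coefficients satisfy x̃_k^{[p,q]} = x̃_{k−1}^{[p,q]} + (q/(p−1)) · x̃_{k−r'}^{[p−1,q−1]} · (x_{k+⌈p/2⌉−1} − x_{k−⌊p/2⌋}), where r' = 1 − (p − 2⌊p/2⌋). -/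
/-!
The knot window of `x̃_k^{[p,q]}` arises from that of `x̃_{k-1}^{[p,q]}` by exchanging the knot
`x_{k-⌊p/2⌋}` for `x_{k+⌈p/2⌉-1}`, and the knots they share form exactly the window of
`x̃_{k-r'}^{[p-1,q-1]}`. Since `e_q(a, S) - e_q(b, S) = (a - b) e_{q-1}(S)`, the recursion follows
from `(p - 1) C(p-2, q-1) = q C(p-1, q)`.
-/

namespace Multiset

theorem esymm_cons_succ {R : Type*} [CommSemiring R] (a : R) (s : Multiset R) (n : ℕ) :
    (a ::ₘ s).esymm (n + 1) = s.esymm (n + 1) + a * s.esymm n := by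
  simp only [esymm, powersetCard_cons, map_add, sum_add, map_map, Function.comp_def, prod_cons,
    sum_map_mul_left]

theorem esymm_cons_sub_esymm_cons {R : Type*} [CommRing R] (a b : R) (s : Multiset R) (n : ℕ) :
    (a ::ₘ s).esymm (n + 1) - (b ::ₘ s).esymm (n + 1) = (a - b) * s.esymm n := by
  rw [esymm_cons_succ, esymm_cons_succ]
  ring

end Multiset

theorem Finset.esymm_map_Icc_sub_esymm_map_Icc_sub_one {R : Type*} [CommRing R] (x : ℤ → R)
    {a b : ℤ} (hab : a ≤ b) (n : ℕ) :
    ((Icc a b).val.map x).esymm (n + 1) - ((Icc (a - 1) (b - 1)).val.map x).esymm (n + 1) =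
      (x b - x (a - 1)) * ((Icc a (b - 1)).val.map x).esymm n := by
  have hright : Icc a b = insert b (Icc a (b - 1)) := by
    rw [← Order.pred_eq_sub_one, insert_Icc_pred_right_eq_Icc hab]
  have hleft : Icc (a - 1) (b - 1) = insert (a - 1) (Icc a (b - 1)) := by
    rw [← Order.pred_eq_sub_one, insert_Icc_left_eq_Icc_pred]
    simpa [Order.pred_eq_sub_one] using hab
  rw [hright, hleft, insert_val_of_notMem (by simp), insert_val_of_notMem (by simp),
    Multiset.map_cons, Multiset.map_cons, Multiset.esymm_cons_sub_esymm_cons]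

theorem Nat.inv_cast_choose_succ_succ {K : Type*} [Field K] [CharZero K] (n k : ℕ) :
    ((n + 1).choose (k + 1) : K)⁻¹ = (k + 1) / (n + 1) / n.choose k := by
  have h : ((n + 1 : ℕ) : K) * n.choose k = (n + 1).choose (k + 1) * (k + 1 : ℕ) := by
    exact_mod_cast add_one_mul_choose_eq n k
  push_cast at h
  rw [div_div, h, div_mul_cancel_right₀ (Nat.cast_add_one_ne_zero k)]

theorem powerCoef_eq_of_window (x : ℤ → ℝ) (p q : ℕ) (k : ℤ) {a b : ℤ}
    (ha : k + 1 - (p / 2 : ℕ) = a) (hb : k + ((p + 1) / 2 : ℕ) - 1 = b) :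
    powerCoef x p q k = ((Finset.Icc a b).val.map x).esymm q / (p - 1).choose q := by
  subst ha hb
  rfl

theorem powerCoef_recursion_general
    (x : ℤ → ℝ) (p : ℕ) (hp : 2 ≤ p)
    (q : ℕ) (hq1 : 1 ≤ q) (k : ℤ) :
    powerCoef x p q k = powerCoef x p q (k - 1) +
      ((q : ℝ) / ((p : ℝ) - 1)) *
        powerCoef x (p - 1) (q - 1) (k - (1 - ((p % 2 : ℕ) : ℤ))) *
        (x (k + ((p + 1) / 2 : ℕ) - 1) - x (k - (p / 2 : ℕ))) := by
  obtain ⟨n, rfl⟩ : ∃ n, q = n + 1 := ⟨q - 1, by omega⟩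
  obtain ⟨m, rfl⟩ : ∃ m, p = m + 2 := ⟨p - 2, by omega⟩
  set a : ℤ := k + 1 - ((m + 2) / 2 : ℕ)
  set b : ℤ := k + ((m + 2 + 1) / 2 : ℕ) - 1
  rw [powerCoef_eq_of_window x _ _ k rfl rfl,
    powerCoef_eq_of_window x _ _ (k - 1) (a := a - 1) (b := b - 1) (by omega) (by omega),
    powerCoef_eq_of_window x _ _ _ (a := a) (b := b - 1) (by omega) (by omega),
    show k - ((m + 2) / 2 : ℕ) = a - 1 by omega, ← sub_eq_iff_eq_add', ← sub_div,
    Finset.esymm_map_Icc_sub_esymm_map_Icc_sub_one x (by omega : a ≤ b)]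
  rw [show m + 2 - 1 = m + 1 by omega, div_eq_mul_inv _ ((m + 1).choose (n + 1) : ℝ),
    Nat.inv_cast_choose_succ_succ]
  simp only [Nat.add_sub_cancel]
  push_cast
  ring

/-- recursion for the power coefficients: for `p ≥ 2` and
`1 ≤ q ≤ p-1`,
`x̃_k^{[p,q]} = x̃_{k-1}^{[p,q]} + (q/(p-1)) x̃_{k-r'}^{[p-1,q-1]} (x_{k+⌈p/2⌉-1} - x_{k-⌊p/2⌋})`,
where `r' = 1 - (p % 2)`. -/
theorem powerCoef_recursion
    (x : ℤ → ℝ) (hx : StrictMono x) (p : ℕ) (hp : 2 ≤ p)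
    (q : ℕ) (hq1 : 1 ≤ q) (hq2 : q ≤ p - 1) (k : ℤ) :
    powerCoef x p q k = powerCoef x p q (k - 1) +
      ((q : ℝ) / ((p : ℝ) - 1)) *
        powerCoef x (p - 1) (q - 1) (k - (1 - ((p % 2 : ℕ) : ℤ))) *
        (x (k + ((p + 1) / 2 : ℕ) - 1) - x (k - (p / 2 : ℕ))) :=
  powerCoef_recursion_general x p hp q hq1 k
end

section
/- Unicity by power coefficients: let p ≥ 2 and let (ψ_k)_{k∈ℤ} be functions ψ_k : ℝ → ℝ such that each ψ_k vanishes identically outside the interval [x_{k−⌊p/2⌋}, x_{k+⌈p/2⌉}), and such that for every q ∈ {0, …, p−1} and every t ∈ ℝ one has Σ_{k∈ℤ} x̃_k^{[p,q]} ψ_k(t) = t^q (the sum having only finitely many nonzero terms). Then ψ_k(t) = φ_k^[p](t) for every k ∈ ℤ and every t ∈ ℝ; that is, the ψ_k must be the B-splines of order p on the given knots. -/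
noncomputable def win (p : ℕ) (k : ℤ) : Finset ℤ :=
  Finset.Icc (k + 1 - (p / 2 : ℕ)) (k + ((p + 1) / 2 : ℕ) - 1)

noncomputable def Gp (x : ℤ → ℝ) (p : ℕ) (k : ℤ) (s : ℝ) : ℝ := ∏ i ∈ win p k, (s - x i)

lemma bspline_mem_of_ne_zero (x : ℤ → ℝ) (hx : Monotone x) :
    ∀ p : ℕ, ∀ k : ℤ, ∀ t : ℝ, Bspline x p k t ≠ 0 →
      x (k - (p / 2 : ℕ)) ≤ t ∧ t < x (k + ((p + 1) / 2 : ℕ)) := by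
  intro p
  induction p using Nat.strong_induction_on with
  | _ p ih =>
    match p with
    | 0 => intro k t h; simp [Bspline] at h
    | 1 =>
      intro k t h
      rw [Bspline] at h
      split_ifs at h with hc
      · refine ⟨le_trans (hx (by push_cast; omega)) hc.1, lt_of_lt_of_le hc.2 (hx (by push_cast; omega))⟩
      · simp at h
    | (p+2) =>
      intro k t h
      rw [Bspline] at h
      by_cases h1 : Bspline x (p + 1) (k - 1 + ((p + 2) % 2 : ℕ)) t = 0
      · by_cases h2 : Bspline x (p + 1) (k + ((p + 2) % 2 : ℕ)) t = 0
        · rw [h1, h2] at h; simp at h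
        · obtain ⟨l1, u1⟩ := ih (p+1) (by omega) _ _ h2
          exact ⟨le_trans (hx (by push_cast; omega)) l1,
            lt_of_lt_of_le u1 (hx (by push_cast; omega))⟩
      · obtain ⟨l1, u1⟩ := ih (p+1) (by omega) _ _ h1
        exact ⟨le_trans (hx (by push_cast; omega)) l1,
          lt_of_lt_of_le u1 (hx (by push_cast; omega))⟩

lemma sum_shift (f : ℤ → ℝ) (a b c : ℤ) :
    ∑ k ∈ Finset.Icc a b, f (k + c) = ∑ k ∈ Finset.Icc (a + c) (b + c), f k := by
  refine Finset.sum_nbij' (i := fun k => k + c) (j := fun k => k - c) ?_ ?_ ?_ ?_ ?_ <;>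
    intros <;> simp_all [Finset.mem_Icc] <;> omega

lemma marsden (x : ℤ → ℝ) (hx : StrictMono x) :
    ∀ p : ℕ, 1 ≤ p → ∀ j : ℤ, ∀ t : ℝ, x j ≤ t → t < x (j + 1) → ∀ s : ℝ,
      ∑ k ∈ Finset.Icc (j + 1 - (((p + 1) / 2 : ℕ) : ℤ)) (j + ((p / 2 : ℕ) : ℤ)),
        Gp x p k s * Bspline x p k t = (s - t) ^ (p - 1) := by
  intro p
  induction p using Nat.strong_induction_on with
  | _ p ih =>
    match p with
    | 0 => intro h; exact absurd h (by omega)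
    | 1 =>
      intro _ j t h1 h2 s
      have hset : Finset.Icc (j + 1 - ((((1:ℕ) + 1) / 2 : ℕ) : ℤ)) (j + (((1:ℕ) / 2 : ℕ) : ℤ))
          = {j} := by ext i; simp only [Finset.mem_Icc, Finset.mem_singleton]; omega
      rw [hset, Finset.sum_singleton]
      have hw : win 1 j = ∅ := by
        rw [win]; apply Finset.Icc_eq_empty; push_cast; omega
      rw [Gp, hw, Finset.prod_empty, one_mul, Bspline, if_pos ⟨h1, h2⟩]
      norm_num
    | (p+2) =>
      intro _ j t hjt hjt' s
      have ihp := ih (p+1) (by omega) (by omega) j t hjt hjt' s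
      rw [show p + 1 + 1 = p + 2 from rfl] at ihp
      rw [show p + 1 - 1 = p from rfl] at ihp
      -- abbreviations (purely notational)
      have key : ∀ k' : ℤ,
          Gp x (p+2) (k' + 1 - (((p+2) % 2 : ℕ) : ℤ)) s *
            ((t - x (k' + 1 - (((p+2) % 2 : ℕ) : ℤ) - ((p + 2) / 2 : ℕ))) /
              (x (k' + 1 - (((p+2) % 2 : ℕ) : ℤ) + ((p + 3) / 2 : ℕ) - 1) -
                x (k' + 1 - (((p+2) % 2 : ℕ) : ℤ) - ((p + 2) / 2 : ℕ)))) +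
          Gp x (p+2) (k' - (((p+2) % 2 : ℕ) : ℤ)) s *
            ((x (k' - (((p+2) % 2 : ℕ) : ℤ) + ((p + 3) / 2 : ℕ)) - t) /
              (x (k' - (((p+2) % 2 : ℕ) : ℤ) + ((p + 3) / 2 : ℕ)) -
                x (k' - (((p+2) % 2 : ℕ) : ℤ) - ((p + 2) / 2 : ℕ) + 1))) =
          (s - t) * Gp x (p+1) k' s := by
        intro k'
        have hw1 : win (p+2) (k' + 1 - (((p+2) % 2 : ℕ) : ℤ)) =
            insert (k' + (((p+2) / 2 : ℕ) : ℤ)) (win (p+1) k') := by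
          ext i; simp only [win, Finset.mem_Icc, Finset.mem_insert]; omega
        have hn1 : (k' + (((p+2) / 2 : ℕ) : ℤ)) ∉ win (p+1) k' := by
          simp only [win, Finset.mem_Icc, not_and, not_le]; intro; omega
        have hw2 : win (p+2) (k' - (((p+2) % 2 : ℕ) : ℤ)) =
            insert (k' - (((p+1) / 2 : ℕ) : ℤ)) (win (p+1) k') := by
          ext i; simp only [win, Finset.mem_Icc, Finset.mem_insert]; omega
        have hn2 : (k' - (((p+1) / 2 : ℕ) : ℤ)) ∉ win (p+1) k' := by
          simp only [win, Finset.mem_Icc, not_and, not_le]; intro; omega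
        have hG1 : Gp x (p+2) (k' + 1 - (((p+2) % 2 : ℕ) : ℤ)) s =
            (s - x (k' + (((p+2) / 2 : ℕ) : ℤ))) * Gp x (p+1) k' s := by
          rw [Gp, hw1, Finset.prod_insert hn1]; rfl
        have hG2 : Gp x (p+2) (k' - (((p+2) % 2 : ℕ) : ℤ)) s =
            (s - x (k' - (((p+1) / 2 : ℕ) : ℤ))) * Gp x (p+1) k' s := by
          rw [Gp, hw2, Finset.prod_insert hn2]; rfl
        have e1 : k' + 1 - (((p+2) % 2 : ℕ) : ℤ) - ((p + 2) / 2 : ℕ)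
            = k' - (((p+1) / 2 : ℕ) : ℤ) := by omega
        have e2 : k' + 1 - (((p+2) % 2 : ℕ) : ℤ) + ((p + 3) / 2 : ℕ) - 1
            = k' + (((p+2) / 2 : ℕ) : ℤ) := by omega
        have e3 : k' - (((p+2) % 2 : ℕ) : ℤ) + ((p + 3) / 2 : ℕ)
            = k' + (((p+2) / 2 : ℕ) : ℤ) := by omega
        have e4 : k' - (((p+2) % 2 : ℕ) : ℤ) - ((p + 2) / 2 : ℕ) + 1
            = k' - (((p+1) / 2 : ℕ) : ℤ) := by omega
        rw [hG1, hG2, e1, e2, e3, e4]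
        have hab : x (k' - (((p+1) / 2 : ℕ) : ℤ)) < x (k' + (((p+2) / 2 : ℕ) : ℤ)) :=
          hx (by omega)
        have hne : x (k' + (((p+2) / 2 : ℕ) : ℤ)) - x (k' - (((p+1) / 2 : ℕ) : ℤ)) ≠ 0 :=
          sub_ne_zero.2 hab.ne'
        set a := x (k' - (((p+1) / 2 : ℕ) : ℤ)) with ha
        set b := x (k' + (((p+2) / 2 : ℕ) : ℤ)) with hb
        set g := Gp x (p+1) k' s with hg
        field_simp
        ring
      simp only [Bspline]
      simp only [mul_add, ← mul_assoc]
      rw [Finset.sum_add_distrib]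
      have hre1 :
          ∑ k ∈ Finset.Icc (j + 1 - (((p + 2 + 1) / 2 : ℕ) : ℤ)) (j + (((p + 2) / 2 : ℕ) : ℤ)),
            Gp x (p + 2) k s *
                ((t - x (k - (((p + 2) / 2 : ℕ) : ℤ))) /
                  (x (k + (((p + 3) / 2 : ℕ) : ℤ) - 1) - x (k - (((p + 2) / 2 : ℕ) : ℤ)))) *
              Bspline x (p + 1) (k - 1 + (((p + 2) % 2 : ℕ) : ℤ)) t
          = ∑ k' ∈ Finset.Icc (j - (((p + 2) / 2 : ℕ) : ℤ)) (j + (((p + 1) / 2 : ℕ) : ℤ)),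
            Gp x (p + 2) (k' + 1 - (((p + 2) % 2 : ℕ) : ℤ)) s *
                ((t - x (k' + 1 - (((p + 2) % 2 : ℕ) : ℤ) - (((p + 2) / 2 : ℕ) : ℤ))) /
                  (x (k' + 1 - (((p + 2) % 2 : ℕ) : ℤ) + (((p + 3) / 2 : ℕ) : ℤ) - 1) -
                    x (k' + 1 - (((p + 2) % 2 : ℕ) : ℤ) - (((p + 2) / 2 : ℕ) : ℤ)))) *
              Bspline x (p + 1) k' t := by
        refine Finset.sum_nbij' (fun k => k - 1 + (((p + 2) % 2 : ℕ) : ℤ))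
          (fun k' => k' + 1 - (((p + 2) % 2 : ℕ) : ℤ)) ?_ ?_ ?_ ?_ ?_
        · intro a ha; simp only [Finset.mem_Icc] at ha ⊢; omega
        · intro a ha; simp only [Finset.mem_Icc] at ha ⊢; omega
        · intro a _; omega
        · intro a _; omega
        · intro a _
          have e : a - 1 + (((p + 2) % 2 : ℕ) : ℤ) + 1 - (((p + 2) % 2 : ℕ) : ℤ) = a := by omega
          rw [e]
      have hre2 :
          ∑ k ∈ Finset.Icc (j + 1 - (((p + 2 + 1) / 2 : ℕ) : ℤ)) (j + (((p + 2) / 2 : ℕ) : ℤ)),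
            Gp x (p + 2) k s *
                ((x (k + (((p + 3) / 2 : ℕ) : ℤ)) - t) /
                  (x (k + (((p + 3) / 2 : ℕ) : ℤ)) - x (k - (((p + 2) / 2 : ℕ) : ℤ) + 1))) *
              Bspline x (p + 1) (k + (((p + 2) % 2 : ℕ) : ℤ)) t
          = ∑ k' ∈ Finset.Icc (j + 1 - (((p + 2) / 2 : ℕ) : ℤ)) (j + (((p + 1) / 2 : ℕ) : ℤ) + 1),
            Gp x (p + 2) (k' - (((p + 2) % 2 : ℕ) : ℤ)) s *
                ((x (k' - (((p + 2) % 2 : ℕ) : ℤ) + (((p + 3) / 2 : ℕ) : ℤ)) - t) /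
                  (x (k' - (((p + 2) % 2 : ℕ) : ℤ) + (((p + 3) / 2 : ℕ) : ℤ)) -
                    x (k' - (((p + 2) % 2 : ℕ) : ℤ) - (((p + 2) / 2 : ℕ) : ℤ) + 1))) *
              Bspline x (p + 1) k' t := by
        refine Finset.sum_nbij' (fun k => k + (((p + 2) % 2 : ℕ) : ℤ))
          (fun k' => k' - (((p + 2) % 2 : ℕ) : ℤ)) ?_ ?_ ?_ ?_ ?_
        · intro a ha; simp only [Finset.mem_Icc] at ha ⊢; omega
        · intro a ha; simp only [Finset.mem_Icc] at ha ⊢; omega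
        · intro a _; omega
        · intro a _; omega
        · intro a _
          have e : a + (((p + 2) % 2 : ℕ) : ℤ) - (((p + 2) % 2 : ℕ) : ℤ) = a := by omega
          rw [e]
      rw [hre1, hre2]
      have hsplit1 : Finset.Icc (j - (((p + 2) / 2 : ℕ) : ℤ)) (j + (((p + 1) / 2 : ℕ) : ℤ))
          = insert (j - (((p + 2) / 2 : ℕ) : ℤ))
              (Finset.Icc (j + 1 - (((p + 2) / 2 : ℕ) : ℤ)) (j + (((p + 1) / 2 : ℕ) : ℤ))) := by
        ext i; simp only [Finset.mem_Icc, Finset.mem_insert]; omega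
      have hsplit2 : Finset.Icc (j + 1 - (((p + 2) / 2 : ℕ) : ℤ)) (j + (((p + 1) / 2 : ℕ) : ℤ) + 1)
          = insert (j + (((p + 1) / 2 : ℕ) : ℤ) + 1)
              (Finset.Icc (j + 1 - (((p + 2) / 2 : ℕ) : ℤ)) (j + (((p + 1) / 2 : ℕ) : ℤ))) := by
        ext i; simp only [Finset.mem_Icc, Finset.mem_insert]; omega
      have hm1 : (j - (((p + 2) / 2 : ℕ) : ℤ)) ∉
          Finset.Icc (j + 1 - (((p + 2) / 2 : ℕ) : ℤ)) (j + (((p + 1) / 2 : ℕ) : ℤ)) := by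
        simp only [Finset.mem_Icc, not_and, not_le]; intro; omega
      have hm2 : (j + (((p + 1) / 2 : ℕ) : ℤ) + 1) ∉
          Finset.Icc (j + 1 - (((p + 2) / 2 : ℕ) : ℤ)) (j + (((p + 1) / 2 : ℕ) : ℤ)) := by
        simp only [Finset.mem_Icc, not_and, not_le]; intro; omega
      rw [hsplit1, hsplit2, Finset.sum_insert hm1, Finset.sum_insert hm2]
      have hz1 : Bspline x (p + 1) (j - (((p + 2) / 2 : ℕ) : ℤ)) t = 0 := by
        by_contra h
        obtain ⟨_, hu⟩ := bspline_mem_of_ne_zero x hx.monotone (p + 1) _ t h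
        have e : (j - (((p + 2) / 2 : ℕ) : ℤ)) + (((p + 1 + 1) / 2 : ℕ) : ℤ) = j := by omega
        rw [e] at hu
        exact absurd hjt (not_le.2 hu)
      have hz2 : Bspline x (p + 1) (j + (((p + 1) / 2 : ℕ) : ℤ) + 1) t = 0 := by
        by_contra h
        obtain ⟨hl, _⟩ := bspline_mem_of_ne_zero x hx.monotone (p + 1) _ t h
        have e : (j + (((p + 1) / 2 : ℕ) : ℤ) + 1) - (((p + 1) / 2 : ℕ) : ℤ) = j + 1 := by omega
        rw [e] at hl
        exact absurd hjt' (not_lt.2 hl)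
      rw [hz1, hz2, mul_zero, mul_zero, zero_add, zero_add, ← Finset.sum_add_distrib]
      trans ∑ k' ∈ Finset.Icc (j + 1 - (((p + 2) / 2 : ℕ) : ℤ)) (j + (((p + 1) / 2 : ℕ) : ℤ)),
        (s - t) * (Gp x (p + 1) k' s * Bspline x (p + 1) k' t)
      · exact Finset.sum_congr rfl fun k' _ => by rw [← add_mul, key k', mul_assoc]
      · rw [← Finset.mul_sum, ihp, show p + 2 - 1 = p + 1 from rfl, pow_succ]; ring

lemma prod_sub_eq_sum_esymm (S : Multiset ℝ) (s : ℝ) :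
    (S.map fun a => s - a).prod =
      ∑ q ∈ Finset.range (Multiset.card S + 1),
        (-1) ^ q * (S.esymm q * s ^ (Multiset.card S - q)) := by
  have h := congrArg (Polynomial.eval s) (Multiset.prod_X_sub_X_eq_sum_esymm S)
  simpa [Polynomial.eval_multiset_prod, Multiset.map_map, Function.comp,
    Polynomial.eval_finset_sum] using h

lemma win_card (p : ℕ) (hp : 1 ≤ p) (k : ℤ) : (win p k).card = p - 1 := by
  rw [win, Int.card_Icc]
  omega

lemma Gp_eq_sum_esymm (x : ℤ → ℝ) (p : ℕ) (hp : 1 ≤ p) (k : ℤ) (s : ℝ) :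
    Gp x p k s = ∑ q ∈ Finset.range p,
      (-1) ^ q * (((win p k).val.map x).esymm q * s ^ (p - 1 - q)) := by
  have hc : Multiset.card ((win p k).val.map x) = p - 1 := by
    rw [Multiset.card_map]; exact win_card p hp k
  have h := prod_sub_eq_sum_esymm ((win p k).val.map x) s
  rw [Multiset.map_map] at h
  rw [Gp, Finset.prod_eq_multiset_prod]
  rw [hc] at h
  rw [show p - 1 + 1 = p by omega] at h
  exact h

/-- unicity by power coefficients: if the functions `ψ k` vanish
outside `[x_{k-⌊p/2⌋}, x_{k+⌈p/2⌉})` and reproduce all power functions `t^q`,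
`0 ≤ q ≤ p-1`, with the power coefficients `x̃_k^{[p,q]}`, then the `ψ k` are
the B-splines of order `p` on the given knots. -/
theorem bspline_unique_from_power_reproduction
    (x : ℤ → ℝ) (hx : StrictMono x)
    (htop : Filter.Tendsto x Filter.atTop Filter.atTop)
    (hbot : Filter.Tendsto x Filter.atBot Filter.atBot)
    (p : ℕ) (hp : 2 ≤ p) (ψ : ℤ → ℝ → ℝ)
    (hsupp : ∀ (k : ℤ) (t : ℝ),
      t ∉ Set.Ico (x (k - (p / 2 : ℕ))) (x (k + ((p + 1) / 2 : ℕ))) → ψ k t = 0)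
    (hrepr : ∀ q : ℕ, q ≤ p - 1 → ∀ t : ℝ,
      ∑ᶠ k : ℤ, powerCoef x p q k * ψ k t = t ^ q) :
    ∀ (k : ℤ) (t : ℝ), ψ k t = Bspline x p k t := by
  intro k t
  obtain ⟨j, hj1, hj2⟩ : ∃ j : ℤ, x j ≤ t ∧ t < x (j + 1) := by
    obtain ⟨n0, hn0⟩ := (hbot.eventually (Filter.eventually_le_atBot t)).exists
    obtain ⟨N, hN⟩ := Filter.eventually_atTop.1 (htop.eventually (Filter.eventually_gt_atTop t))
    obtain ⟨j, hPj, hmax⟩ := Int.exists_greatest_of_bdd (P := fun z => x z ≤ t)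
      ⟨N, fun z hz => by
        by_contra hc
        push_neg at hc
        exact absurd (hN z (by omega)) (not_lt.2 hz)⟩ ⟨n0, hn0⟩
    refine ⟨j, hPj, ?_⟩
    by_contra hc
    push_neg at hc
    exact absurd (hmax (j + 1) hc) (by omega)
  have hmemψ : ∀ k : ℤ, ψ k t ≠ 0 →
      k ∈ Finset.Icc (j + 1 - (((p + 1) / 2 : ℕ) : ℤ)) (j + ((p / 2 : ℕ) : ℤ)) := by
    intro k hk
    have ht : t ∈ Set.Ico (x (k - (p / 2 : ℕ))) (x (k + ((p + 1) / 2 : ℕ))) := by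
      by_contra hc; exact hk (hsupp k t hc)
    have l1 := hx.lt_iff_lt.1 (lt_of_le_of_lt ht.1 hj2)
    have l2 := hx.lt_iff_lt.1 (lt_of_le_of_lt hj1 ht.2)
    simp only [Finset.mem_Icc]; omega
  have hmemB : ∀ k : ℤ, Bspline x p k t ≠ 0 →
      k ∈ Finset.Icc (j + 1 - (((p + 1) / 2 : ℕ) : ℤ)) (j + ((p / 2 : ℕ) : ℤ)) := by
    intro k hk
    obtain ⟨h1, h2⟩ := bspline_mem_of_ne_zero x hx.monotone p k t hk
    have l1 := hx.lt_iff_lt.1 (lt_of_le_of_lt h1 hj2)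
    have l2 := hx.lt_iff_lt.1 (lt_of_le_of_lt hj1 h2)
    simp only [Finset.mem_Icc]; omega
  have hpsum : ∀ q : ℕ, q ≤ p - 1 →
      ∑ k ∈ Finset.Icc (j + 1 - (((p + 1) / 2 : ℕ) : ℤ)) (j + ((p / 2 : ℕ) : ℤ)),
          ((win p k).val.map x).esymm q * ψ k t
        = (Nat.choose (p - 1) q : ℝ) * t ^ q := by
    intro q hq
    have hsub : Function.support (fun k => powerCoef x p q k * ψ k t) ⊆
        ↑(Finset.Icc (j + 1 - (((p + 1) / 2 : ℕ) : ℤ)) (j + ((p / 2 : ℕ) : ℤ))) := by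
      intro k hk
      simp only [Function.mem_support] at hk
      have := hmemψ k (right_ne_zero_of_mul hk)
      simpa [Finset.mem_Icc, Set.mem_Icc] using this
    have hfin : ∑ k ∈ Finset.Icc (j + 1 - (((p + 1) / 2 : ℕ) : ℤ)) (j + ((p / 2 : ℕ) : ℤ)),
        powerCoef x p q k * ψ k t = t ^ q := by
      rw [← finsum_eq_finset_sum_of_support_subset _ hsub, hrepr q hq t]
    have hC : (Nat.choose (p - 1) q : ℝ) ≠ 0 :=
      Nat.cast_ne_zero.2 (Nat.choose_pos hq).ne'
    calc ∑ k ∈ Finset.Icc (j + 1 - (((p + 1) / 2 : ℕ) : ℤ)) (j + ((p / 2 : ℕ) : ℤ)),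
            ((win p k).val.map x).esymm q * ψ k t
        = (Nat.choose (p - 1) q : ℝ) *
            ∑ k ∈ Finset.Icc (j + 1 - (((p + 1) / 2 : ℕ) : ℤ)) (j + ((p / 2 : ℕ) : ℤ)),
              powerCoef x p q k * ψ k t := by
          rw [Finset.mul_sum]
          refine Finset.sum_congr rfl fun k _ => ?_
          rw [win, powerCoef]
          field_simp
      _ = (Nat.choose (p - 1) q : ℝ) * t ^ q := by rw [hfin]
  have hψG : ∀ s : ℝ,
      ∑ k ∈ Finset.Icc (j + 1 - (((p + 1) / 2 : ℕ) : ℤ)) (j + ((p / 2 : ℕ) : ℤ)),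
        ψ k t * Gp x p k s = (s - t) ^ (p - 1) := by
    intro s
    calc ∑ k ∈ Finset.Icc (j + 1 - (((p + 1) / 2 : ℕ) : ℤ)) (j + ((p / 2 : ℕ) : ℤ)),
            ψ k t * Gp x p k s
        = ∑ k ∈ Finset.Icc (j + 1 - (((p + 1) / 2 : ℕ) : ℤ)) (j + ((p / 2 : ℕ) : ℤ)),
            ∑ q ∈ Finset.range p,
              (-1) ^ q * (((win p k).val.map x).esymm q * ψ k t * s ^ (p - 1 - q)) := by
          refine Finset.sum_congr rfl fun k _ => ?_
          rw [Gp_eq_sum_esymm x p (by omega) k s, Finset.mul_sum]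
          exact Finset.sum_congr rfl fun q _ => by ring
      _ = ∑ q ∈ Finset.range p,
            ∑ k ∈ Finset.Icc (j + 1 - (((p + 1) / 2 : ℕ) : ℤ)) (j + ((p / 2 : ℕ) : ℤ)),
              (-1) ^ q * (((win p k).val.map x).esymm q * ψ k t * s ^ (p - 1 - q)) :=
          Finset.sum_comm
      _ = ∑ q ∈ Finset.range p,
            (-1) ^ q * ((Nat.choose (p - 1) q : ℝ) * t ^ q * s ^ (p - 1 - q)) := by
          refine Finset.sum_congr rfl fun q hq => ?_
          have hq' : q ≤ p - 1 := by
            simp only [Finset.mem_range] at hq; omega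
          rw [← hpsum q hq', Finset.sum_mul, Finset.mul_sum]
      _ = (s - t) ^ (p - 1) := by
          have hb := Commute.add_pow (Commute.all (-t) s) (p - 1)
          rw [show p - 1 + 1 = p by omega] at hb
          rw [show -t + s = s - t by ring] at hb
          rw [hb]
          exact Finset.sum_congr rfl fun q _ => by rw [neg_pow]; ring
  have hBG : ∀ s : ℝ,
      ∑ k ∈ Finset.Icc (j + 1 - (((p + 1) / 2 : ℕ) : ℤ)) (j + ((p / 2 : ℕ) : ℤ)),
        Bspline x p k t * Gp x p k s = (s - t) ^ (p - 1) := by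
    intro s
    rw [← marsden x hx p (by omega) j t hj1 hj2 s]
    exact Finset.sum_congr rfl fun k _ => mul_comm _ _
  have hD : ∀ s : ℝ,
      ∑ k ∈ Finset.Icc (j + 1 - (((p + 1) / 2 : ℕ) : ℤ)) (j + ((p / 2 : ℕ) : ℤ)),
        (ψ k t - Bspline x p k t) * Gp x p k s = 0 := by
    intro s
    simp only [sub_mul]
    rw [Finset.sum_sub_distrib, hψG s, hBG s, sub_self]
  have hM : ∀ k0 : ℤ,
      k0 ∈ Finset.Icc (j + 1 - (((p + 1) / 2 : ℕ) : ℤ)) (j + ((p / 2 : ℕ) : ℤ)) →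
      (∀ k' ∈ Finset.Icc (j + 1 - (((p + 1) / 2 : ℕ) : ℤ)) (j + ((p / 2 : ℕ) : ℤ)),
        k' < k0 → ψ k' t - Bspline x p k' t = 0) →
      ψ k0 t - Bspline x p k0 t = 0 := by
    intro k0 hk0 hprev
    have h0 := hD (x (k0 + (((p + 1) / 2 : ℕ) : ℤ)))
    rw [Finset.sum_eq_single k0] at h0
    · have hpos : 0 < Gp x p k0 (x (k0 + (((p + 1) / 2 : ℕ) : ℤ))) := by
        rw [Gp]
        apply Finset.prod_pos
        intro i hiw
        rw [sub_pos]
        apply hx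
        simp only [win, Finset.mem_Icc] at hiw
        omega
      exact (mul_eq_zero.1 h0).resolve_right hpos.ne'
    · intro b hb hbne
      rcases lt_or_gt_of_ne hbne with hlt | hgt
      · rw [hprev b hb hlt, zero_mul]
      · have hzero : Gp x p b (x (k0 + (((p + 1) / 2 : ℕ) : ℤ))) = 0 := by
          rw [Gp]
          apply Finset.prod_eq_zero (i := k0 + (((p + 1) / 2 : ℕ) : ℤ))
          · simp only [Finset.mem_Icc] at hb hk0
            simp only [win, Finset.mem_Icc]
            omega
          · simp
        rw [hzero, mul_zero]
    · intro hk0'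
      exact absurd hk0 hk0'
  have hall : ∀ n : ℕ, ∀ k' ∈ Finset.Icc (j + 1 - (((p + 1) / 2 : ℕ) : ℤ)) (j + ((p / 2 : ℕ) : ℤ)),
      k' ≤ (j + 1 - (((p + 1) / 2 : ℕ) : ℤ)) + n → ψ k' t - Bspline x p k' t = 0 := by
    intro n
    induction n with
    | zero =>
      intro k' hk' hkn
      refine hM k' hk' fun k'' hk'' hlt => ?_
      simp only [Finset.mem_Icc] at hk' hk''
      exact absurd hlt (by omega)
    | succ n ihn =>
      intro k' hk' hkn
      by_cases hc : k' ≤ (j + 1 - (((p + 1) / 2 : ℕ) : ℤ)) + n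
      · exact ihn k' hk' hc
      · refine hM k' hk' fun k'' hk'' hlt => ?_
        refine ihn k'' hk'' (by omega)
  by_cases hmem : k ∈ Finset.Icc (j + 1 - (((p + 1) / 2 : ℕ) : ℤ)) (j + ((p / 2 : ℕ) : ℤ))
  · have hk0 := hall (k - (j + 1 - (((p + 1) / 2 : ℕ) : ℤ))).toNat k hmem (by
      simp only [Finset.mem_Icc] at hmem; omega)
    linarith [hk0]
  · have h1 : ψ k t = 0 := by
      by_contra hc; exact hmem (hmemψ k hc)
    have h2 : Bspline x p k t = 0 := by
      by_contra hc; exact hmem (hmemB k hc)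
    rw [h1, h2]
end

section
/- Factorisation into lifting steps (primal case): let H : ℤ × ℤ → ℝ (rows indexed by the first argument, columns by the second) and let k₁, k₂ : ℤ → ℤ be strictly increasing bijections of ℤ with k₁(ℓ) < k₂(ℓ) for all ℓ, such that for every column ℓ: H_{i,ℓ} = 0 unless 2k₁(ℓ) ≤ i ≤ 2k₂(ℓ), and the odd-row entries H_{2k₁(ℓ)+1, ℓ} and H_{2k₂(ℓ)−1, ℓ} are nonzero. Define the even and odd submatrices by (H_e)_{k,ℓ} = H_{2k,ℓ} and (H_o)_{k,ℓ} = H_{2k+1,ℓ}. Then there exist a lower bidiagonal matrix U : ℤ × ℤ → ℝ (i.e., U_{k,m} = 0 unless m ∈ {k−1, k}) and a matrix H_e' : ℤ × ℤ → ℝ with (H_e')_{k,ℓ} = 0 unless k₁(ℓ) < k < k₂(ℓ), such that H_e = H_e' − U·H_o entrywise (all the sums involved being finite). -/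
/-!
Row `k` of `U` is read off from the two columns whose band starts or ends at row `2k`: the
diagonal entry `U k k` cancels the even entry `H (2k) ℓ` against the nonzero odd entry just
below it in the column `ℓ` with `k₁ ℓ = k`, and `U k (k-1)` cancels it against the nonzero odd
entry just above it in the column with `k₂ ℓ = k`. Injectivity of `k₁` and `k₂` makes these
columns unique, and in every other column outside the band the three entries of `H` involved
vanish.
-/

open Function

/-- The lower bidiagonal update matrix; `invFun kᵢ k` is the column whose band starts
(resp. ends) at the even row `2k`. -/
noncomputable def primalUpdate (H : ℤ → ℤ → ℝ) (k₁ k₂ : ℤ → ℤ) (k m : ℤ) : ℝ :=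
  if m = k then -H (2 * k) (invFun k₁ k) / H (2 * k + 1) (invFun k₁ k)
  else if m = k - 1 then -H (2 * k) (invFun k₂ k) / H (2 * k - 1) (invFun k₂ k)
  else 0

/-- The even rows after the lifting step, `H_e + U · H_o`. -/
def liftedEven (H U : ℤ → ℤ → ℝ) (k ℓ : ℤ) : ℝ :=
  H (2 * k) ℓ + (U k (k - 1) * H (2 * (k - 1) + 1) ℓ + U k k * H (2 * k + 1) ℓ)

section

variable {H : ℤ → ℤ → ℝ} {k₁ k₂ : ℤ → ℤ}

theorem primalUpdate_eq_zero {k m : ℤ} (h₁ : m ≠ k - 1) (h₂ : m ≠ k) :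
    primalUpdate H k₁ k₂ k m = 0 := by
  simp [primalUpdate, h₁, h₂]

theorem primalUpdate_self (hk₁ : Injective k₁) (ℓ : ℤ) :
    primalUpdate H k₁ k₂ (k₁ ℓ) (k₁ ℓ) = -H (2 * k₁ ℓ) ℓ / H (2 * k₁ ℓ + 1) ℓ := by
  simp [primalUpdate, leftInverse_invFun hk₁ ℓ]

theorem primalUpdate_sub_one (hk₂ : Injective k₂) (ℓ : ℤ) :
    primalUpdate H k₁ k₂ (k₂ ℓ) (k₂ ℓ - 1) = -H (2 * k₂ ℓ) ℓ / H (2 * k₂ ℓ - 1) ℓ := by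
  simp [primalUpdate, leftInverse_invFun hk₂ ℓ]

end

theorem liftedEven_eq_zero_of_vanishing {H : ℤ → ℤ → ℝ} (U : ℤ → ℤ → ℝ) {k ℓ : ℤ}
    (hprev : H (2 * k - 1) ℓ = 0) (hcur : H (2 * k) ℓ = 0) (hnext : H (2 * k + 1) ℓ = 0) :
    liftedEven H U k ℓ = 0 := by
  have h : 2 * (k - 1) + 1 = 2 * k - 1 := by ring
  simp [liftedEven, h, hprev, hcur, hnext]

theorem liftedEven_primalUpdate_band_start {H : ℤ → ℤ → ℝ} {k₁ : ℤ → ℤ} (k₂ : ℤ → ℤ)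
    (hk₁ : Injective k₁) {ℓ : ℤ} (hprev : H (2 * k₁ ℓ - 1) ℓ = 0)
    (hodd : H (2 * k₁ ℓ + 1) ℓ ≠ 0) :
    liftedEven H (primalUpdate H k₁ k₂) (k₁ ℓ) ℓ = 0 := by
  have h : 2 * (k₁ ℓ - 1) + 1 = 2 * k₁ ℓ - 1 := by ring
  rw [liftedEven, primalUpdate_self hk₁, h, hprev]
  field_simp
  ring

theorem liftedEven_primalUpdate_band_end {H : ℤ → ℤ → ℝ} (k₁ : ℤ → ℤ) {k₂ : ℤ → ℤ}
    (hk₂ : Injective k₂) {ℓ : ℤ} (hnext : H (2 * k₂ ℓ + 1) ℓ = 0)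
    (hodd : H (2 * k₂ ℓ - 1) ℓ ≠ 0) :
    liftedEven H (primalUpdate H k₁ k₂) (k₂ ℓ) ℓ = 0 := by
  have h : 2 * (k₂ ℓ - 1) + 1 = 2 * k₂ ℓ - 1 := by ring
  rw [liftedEven, primalUpdate_sub_one hk₂, h, hnext]
  field_simp
  ring

theorem liftedEven_primalUpdate_eq_zero_of_not_mem {H : ℤ → ℤ → ℝ} {k₁ k₂ : ℤ → ℤ}
    (hk₁ : Injective k₁) (hk₂ : Injective k₂)
    (hband : ∀ i ℓ : ℤ, (i < 2 * k₁ ℓ ∨ 2 * k₂ ℓ < i) → H i ℓ = 0)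
    (hodd1 : ∀ ℓ : ℤ, H (2 * k₁ ℓ + 1) ℓ ≠ 0)
    (hodd2 : ∀ ℓ : ℤ, H (2 * k₂ ℓ - 1) ℓ ≠ 0) {k ℓ : ℤ} (hk : ¬(k₁ ℓ < k ∧ k < k₂ ℓ)) :
    liftedEven H (primalUpdate H k₁ k₂) k ℓ = 0 := by
  rcases lt_trichotomy k (k₁ ℓ) with hbelow | rfl | hstart
  · exact liftedEven_eq_zero_of_vanishing _ (hband _ _ (.inl (by omega)))
      (hband _ _ (.inl (by omega))) (hband _ _ (.inl (by omega)))
  · exact liftedEven_primalUpdate_band_start k₂ hk₁ (hband _ _ (.inl (by omega))) (hodd1 ℓ)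
  obtain rfl | habove := (not_lt.mp fun h => hk ⟨hstart, h⟩).eq_or_lt
  · exact liftedEven_primalUpdate_band_end k₁ hk₂ (hband _ _ (.inr (by omega))) (hodd2 ℓ)
  · exact liftedEven_eq_zero_of_vanishing _ (hband _ _ (.inr (by omega)))
      (hband _ _ (.inr (by omega))) (hband _ _ (.inr (by omega)))

theorem lifting_factorisation_primal_general
    (H : ℤ → ℤ → ℝ) (k₁ k₂ : ℤ → ℤ)
    (hk₁bij : Function.Bijective k₁) (hk₂bij : Function.Bijective k₂)
    (hband : ∀ i ℓ : ℤ, (i < 2 * k₁ ℓ ∨ 2 * k₂ ℓ < i) → H i ℓ = 0)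
    (hodd1 : ∀ ℓ : ℤ, H (2 * k₁ ℓ + 1) ℓ ≠ 0)
    (hodd2 : ∀ ℓ : ℤ, H (2 * k₂ ℓ - 1) ℓ ≠ 0) :
    ∃ U He' : ℤ → ℤ → ℝ,
      (∀ k m : ℤ, m ≠ k - 1 → m ≠ k → U k m = 0) ∧
      (∀ k ℓ : ℤ, ¬(k₁ ℓ < k ∧ k < k₂ ℓ) → He' k ℓ = 0) ∧
      (∀ k ℓ : ℤ, H (2 * k) ℓ =
        He' k ℓ - (U k (k - 1) * H (2 * (k - 1) + 1) ℓ + U k k * H (2 * k + 1) ℓ)) :=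
  ⟨primalUpdate H k₁ k₂, liftedEven H (primalUpdate H k₁ k₂),
    fun _ _ => primalUpdate_eq_zero,
    fun _ _ => liftedEven_primalUpdate_eq_zero_of_not_mem hk₁bij.1 hk₂bij.1 hband hodd1 hodd2,
    fun _ _ => (add_sub_cancel_right _ _).symm⟩

/-- factorisation into lifting steps (primal case).  Given a
refinement matrix `H` (rows indexed by the first argument, columns by the
second) whose columns are supported on the rows `2k₁(ℓ), …, 2k₂(ℓ)` with
nonzero extreme odd entries, there exist a lower bidiagonal update matrix `U`
and an even matrix `He'` supported strictly inside the band, such that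
`H_e = He' - U · H_o` entrywise, where `(H_e)_{k,ℓ} = H_{2k,ℓ}`,
`(H_o)_{k,ℓ} = H_{2k+1,ℓ}`, and the product with the bidiagonal `U` is the
finite sum `U_{k,k-1} (H_o)_{k-1,ℓ} + U_{k,k} (H_o)_{k,ℓ}`. -/
theorem lifting_factorisation_primal
    (H : ℤ → ℤ → ℝ) (k₁ k₂ : ℤ → ℤ)
    (hk₁mono : StrictMono k₁) (hk₂mono : StrictMono k₂)
    (hk₁bij : Function.Bijective k₁) (hk₂bij : Function.Bijective k₂)
    (hlt : ∀ ℓ : ℤ, k₁ ℓ < k₂ ℓ)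
    (hband : ∀ i ℓ : ℤ, (i < 2 * k₁ ℓ ∨ 2 * k₂ ℓ < i) → H i ℓ = 0)
    (hodd1 : ∀ ℓ : ℤ, H (2 * k₁ ℓ + 1) ℓ ≠ 0)
    (hodd2 : ∀ ℓ : ℤ, H (2 * k₂ ℓ - 1) ℓ ≠ 0) :
    ∃ U He' : ℤ → ℤ → ℝ,
      (∀ k m : ℤ, m ≠ k - 1 → m ≠ k → U k m = 0) ∧
      (∀ k ℓ : ℤ, ¬(k₁ ℓ < k ∧ k < k₂ ℓ) → He' k ℓ = 0) ∧
      (∀ k ℓ : ℤ, H (2 * k) ℓ =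
        He' k ℓ - (U k (k - 1) * H (2 * (k - 1) + 1) ℓ + U k k * H (2 * k + 1) ℓ)) :=
  lifting_factorisation_primal_general H k₁ k₂ hk₁bij hk₂bij hband hodd1 hodd2
end

section
/- Wavelet transform from a lifting factorisation: let n, n' be natural numbers, D an invertible real n × n matrix, U a real n × n' matrix and H_o a real n' × n matrix. Set P = H_o·D⁻¹ and H_e = D − U·H_o. Define the forward map F : ℝⁿ × ℝ^{n'} → ℝⁿ × ℝ^{n'} by F(s_e, s_o) = (s, d) with s = D⁻¹(s_e + U s_o) and d = s_o − P D s, and the inverse map I : ℝⁿ × ℝ^{n'} → ℝⁿ × ℝ^{n'} by I(s, d) = (s_e, s_o) with s_o = d + P D s and s_e = D s − U s_o. Then I ∘ F and F ∘ I are both the identity map, and for every s ∈ ℝⁿ one has I(s, 0) = (H_e s, H_o s); that is, the constructed transform has H with even block H_e and odd block H_o as its refinement matrix. -/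
/-!
Since `P D = H_o D⁻¹ D = H_o`, the forward map is the update `s_e ↦ s_e + U s_o`, followed by
the scaling `D⁻¹`, followed by the prediction `s_o ↦ s_o - H_o s`; the inverse map undoes these
three steps in reverse order. Feeding `(s, 0)` into the inverse gives `s_o = H_o s` and
`s_e = D s - U H_o s = H_e s`.
-/

open Matrix

namespace Matrix

variable {R m k : Type*} [Ring R] [Fintype m] [Fintype k]

def liftingForward (D' : Matrix m m R) (U : Matrix m k R) (Ho : Matrix k m R)
    (v : (m → R) × (k → R)) : (m → R) × (k → R) :=
  let s := D' *ᵥ (v.1 + U *ᵥ v.2)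
  (s, v.2 - Ho *ᵥ s)

def liftingInverse (D : Matrix m m R) (U : Matrix m k R) (Ho : Matrix k m R)
    (v : (m → R) × (k → R)) : (m → R) × (k → R) :=
  let so := v.2 + Ho *ᵥ v.1
  (D *ᵥ v.1 - U *ᵥ so, so)

theorem liftingInverse_liftingForward [DecidableEq m] {D D' : Matrix m m R} (hD : D * D' = 1)
    (U : Matrix m k R) (Ho : Matrix k m R) (v : (m → R) × (k → R)) :
    liftingInverse D U Ho (liftingForward D' U Ho v) = v := by
  simp [liftingForward, liftingInverse, mulVec_mulVec, hD]

theorem liftingForward_liftingInverse [DecidableEq m] {D D' : Matrix m m R} (hD' : D' * D = 1)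
    (U : Matrix m k R) (Ho : Matrix k m R) (v : (m → R) × (k → R)) :
    liftingForward D' U Ho (liftingInverse D U Ho v) = v := by
  simp [liftingForward, liftingInverse, mulVec_mulVec, hD']

theorem liftingInverse_zero_right (D : Matrix m m R) (U : Matrix m k R) (Ho : Matrix k m R)
    (s : m → R) : liftingInverse D U Ho (s, 0) = ((D - U * Ho) *ᵥ s, Ho *ᵥ s) := by
  simp [liftingInverse, sub_mulVec, mulVec_mulVec]

end Matrix

/-- wavelet transform from a lifting factorisation.  With `D`
invertible (two-sided inverse `D'`), `P = H_o · D⁻¹` and `H_e = D - U · H_o`,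
the forward map `F(s_e, s_o) = (s, d)` with `s = D⁻¹(s_e + U s_o)`,
`d = s_o - P D s`, and the inverse map `I(s, d) = (s_e, s_o)` with
`s_o = d + P D s`, `s_e = D s - U s_o`, are mutually inverse, and
`I(s, 0) = (H_e s, H_o s)`, i.e. the refinement matrix of the constructed
transform has even block `H_e` and odd block `H_o`. -/
theorem wavelet_transform_from_lifting
    (n n' : ℕ) (D D' : Matrix (Fin n) (Fin n) ℝ)
    (hD : D * D' = 1) (hD' : D' * D = 1)
    (U : Matrix (Fin n) (Fin n') ℝ) (Ho : Matrix (Fin n') (Fin n) ℝ)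
    (P : Matrix (Fin n') (Fin n) ℝ) (hP : P = Ho * D')
    (He : Matrix (Fin n) (Fin n) ℝ) (hHe : He = D - U * Ho)
    (F : (Fin n → ℝ) × (Fin n' → ℝ) → (Fin n → ℝ) × (Fin n' → ℝ))
    (hF : ∀ se : Fin n → ℝ, ∀ so : Fin n' → ℝ,
      F (se, so) = (D'.mulVec (se + U.mulVec so),
        so - (P * D).mulVec (D'.mulVec (se + U.mulVec so))))
    (I : (Fin n → ℝ) × (Fin n' → ℝ) → (Fin n → ℝ) × (Fin n' → ℝ))
    (hI : ∀ s : Fin n → ℝ, ∀ d : Fin n' → ℝ,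
      I (s, d) = (D.mulVec s - U.mulVec (d + (P * D).mulVec s),
        d + (P * D).mulVec s)) :
    (∀ v : (Fin n → ℝ) × (Fin n' → ℝ), I (F v) = v) ∧
    (∀ v : (Fin n → ℝ) × (Fin n' → ℝ), F (I v) = v) ∧
    (∀ s : Fin n → ℝ, I (s, 0) = (He.mulVec s, Ho.mulVec s)) := by
  have hPD : P * D = Ho := by rw [hP, Matrix.mul_assoc, hD', Matrix.mul_one]
  have hF' : F = liftingForward D' U Ho := funext fun ⟨se, so⟩ => by
    rw [hF, hPD]; rfl
  have hI' : I = liftingInverse D U Ho := funext fun ⟨s, d⟩ => by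
    rw [hI, hPD]; rfl
  subst hF' hI' hHe
  exact ⟨liftingInverse_liftingForward hD U Ho, liftingForward_liftingInverse hD' U Ho,
    liftingInverse_zero_right D U Ho⟩
end

section
/- Final update step: let n, m, m' be natural numbers with m + m' = n, and let H, H̃ be real n × m matrices and G, G̃, G⁰ real n × m' matrices satisfying G̃ᵀ G⁰ = I_{m'} and H H̃ᵀ + G G̃ᵀ = I_n. Define the update matrix U = H̃ᵀ G⁰ (an m × m' matrix). Then G = G⁰ − H U. -/
open Matrix

theorem Matrix.eq_sub_of_mul_add_mul_eq_one {ι κ ν R : Type*} [Fintype ι] [Fintype κ] [Fintype ν]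
    [DecidableEq ι] [DecidableEq ν] [Ring R]
    {A : Matrix ι κ R} {B : Matrix κ ι R} {C E : Matrix ι ν R} {D : Matrix ν ι R}
    (hDE : D * E = 1) (h : A * B + C * D = 1) :
    C = E - A * (B * E) := by
  have hE : (A * B + C * D) * E = E := by rw [h, Matrix.one_mul]
  rw [Matrix.add_mul, Matrix.mul_assoc, Matrix.mul_assoc, hDE, Matrix.mul_one] at hE
  exact eq_sub_of_add_eq' hE

theorem final_update_step_general
    (n m m' : ℕ)
    (H Ht : Matrix (Fin n) (Fin m) ℝ) (G Gt G0 : Matrix (Fin n) (Fin m') ℝ)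
    (h1 : Gtᵀ * G0 = 1) (h2 : H * Htᵀ + G * Gtᵀ = 1) :
    G = G0 - H * (Htᵀ * G0) :=
  eq_sub_of_mul_add_mul_eq_one h1 h2

/-- final update step: if `G̃ᵀ G⁰ = I` and the perfect
reconstruction property `H H̃ᵀ + G G̃ᵀ = I` holds, then with the update matrix
`U = H̃ᵀ G⁰` one has `G = G⁰ - H U`. -/
theorem final_update_step
    (n m m' : ℕ) (hmm : m + m' = n)
    (H Ht : Matrix (Fin n) (Fin m) ℝ) (G Gt G0 : Matrix (Fin n) (Fin m') ℝ)
    (h1 : Gtᵀ * G0 = 1) (h2 : H * Htᵀ + G * Gtᵀ = 1) :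
    G = G0 - H * (Htᵀ * G0) :=
  final_update_step_general n m m' H Ht G Gt G0 h1 h2
end

section
/- Multiscale variance propagation bound: let n and m be natural numbers, W a real n × m matrix and W̃ a real m × n matrix with W̃ W = I_m, and set P = W W̃ (so P is idempotent of rank m). Then every nonzero singular value of P is at least 1; consequently the squared Frobenius norm satisfies ‖P‖_F² ≥ m, i.e., the multiscale variance propagation κ_F = ‖P‖_F / √m is at least 1, and κ_F = 1 holds if and only if P is symmetric, i.e., if and only if P is the orthogonal projection onto the column space of W. -/
/-!
`P = W W̃` is idempotent with trace `tr (W̃ W) = m`. The defect of symmetry satisfies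
`‖P - Pᵀ‖_F² = 2‖P‖_F² - 2 tr (P²) = 2‖P‖_F² - 2m`, which gives the Frobenius bound together
with its equality case. For the singular values: an eigenvector `v` of `P Pᵀ` with eigenvalue
`μ ≠ 0` lies in the range of `P`, so `P v = v` and `⟨v, Pᵀ v⟩ = ‖v‖²`; Cauchy–Schwarz then gives
`‖v‖² ≤ ‖Pᵀ v‖² = μ ‖v‖²`.
-/

open Matrix

namespace Matrix

variable {ι R : Type*} [Fintype ι]

theorem sq_dotProduct_le [CommRing R] [LinearOrder R] [IsStrictOrderedRing R] (v w : ι → R) :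
    (v ⬝ᵥ w) ^ 2 ≤ (v ⬝ᵥ v) * (w ⬝ᵥ w) := by
  simpa only [dotProduct, sq] using Finset.sum_mul_sq_le_sq_mul_sq Finset.univ v w

theorem trace_mul_self_eq_sum [CommRing R] (A : Matrix ι ι R) :
    trace (A * A) = ∑ i, ∑ j, A i j * A j i := by
  simp only [trace, diag, mul_apply]

theorem sum_sq_sub_transpose [CommRing R] (A : Matrix ι ι R) :
    ∑ i, ∑ j, (A i j - A j i) ^ 2 = 2 * ∑ i, ∑ j, A i j ^ 2 - 2 * trace (A * A) := by
  have hswap : ∑ i, ∑ j, A j i ^ 2 = ∑ i, ∑ j, A i j ^ 2 := Finset.sum_comm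
  calc ∑ i, ∑ j, (A i j - A j i) ^ 2
      = ∑ i, ∑ j, A i j ^ 2 + ∑ i, ∑ j, A j i ^ 2 - 2 * ∑ i, ∑ j, A i j * A j i := by
        simp only [sub_sq', Finset.sum_add_distrib, Finset.sum_sub_distrib, Finset.mul_sum,
          mul_assoc]
    _ = 2 * ∑ i, ∑ j, A i j ^ 2 - 2 * trace (A * A) := by
        rw [hswap, trace_mul_self_eq_sum]; ring

theorem sum_sq_sub_transpose_eq_zero_iff [CommRing R] [LinearOrder R] [IsStrictOrderedRing R]
    (A : Matrix ι ι R) : ∑ i, ∑ j, (A i j - A j i) ^ 2 = 0 ↔ Aᵀ = A := by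
  simp only [Fintype.sum_eq_zero_iff_of_nonneg (fun _ => Fintype.sum_nonneg fun _ => sq_nonneg _),
    Fintype.sum_eq_zero_iff_of_nonneg (fun _ => sq_nonneg _), funext_iff, Pi.zero_apply,
    pow_eq_zero_iff two_ne_zero, sub_eq_zero, ← Matrix.ext_iff, transpose_apply]
  exact forall_comm

theorem trace_mul_eq_of_mul_eq_one [CommRing R] {n m : ℕ} {W : Matrix (Fin n) (Fin m) R}
    {Wt : Matrix (Fin m) (Fin n) R} (h : Wt * W = 1) : trace (W * Wt) = m := by
  rw [trace_mul_comm, h, trace_one, Fintype.card_fin]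

theorem isIdempotentElem_mul_of_mul_eq_one [Semiring R] {κ : Type*} [Fintype κ] [DecidableEq κ]
    {W : Matrix ι κ R} {Wt : Matrix κ ι R} (h : Wt * W = 1) : IsIdempotentElem (W * Wt) := by
  rw [IsIdempotentElem, Matrix.mul_assoc, ← Matrix.mul_assoc Wt, h, Matrix.one_mul]

theorem mulVec_eq_self_of_mul_transpose_mulVec_eq_smul [Field R] {P : Matrix ι ι R}
    (hP : IsIdempotentElem P) {μ : R} {v : ι → R} (hv : (P * Pᵀ) *ᵥ v = μ • v) (hμ : μ ≠ 0) :
    P *ᵥ v = v := by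
  have hrange : v = P *ᵥ (μ⁻¹ • (Pᵀ *ᵥ v)) := by
    rw [mulVec_smul, mulVec_mulVec, hv, smul_smul, inv_mul_cancel₀ hμ, one_smul]
  rw [hrange, mulVec_mulVec, hP.eq]

theorem one_le_of_mul_transpose_mulVec_eq_smul [Field R] [LinearOrder R] [IsStrictOrderedRing R]
    {P : Matrix ι ι R} (hP : IsIdempotentElem P) {μ : R} {v : ι → R} (hv0 : v ≠ 0)
    (hv : (P * Pᵀ) *ᵥ v = μ • v) (hμ : μ ≠ 0) : 1 ≤ μ := by
  have hpos : 0 < v ⬝ᵥ v :=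
    lt_of_le_of_ne (Finset.sum_nonneg fun i _ => mul_self_nonneg (v i))
      (Ne.symm (dotProduct_self_eq_zero.not.mpr hv0))
  have hfix := mulVec_eq_self_of_mul_transpose_mulVec_eq_smul hP hv hμ
  have hcross : v ⬝ᵥ (Pᵀ *ᵥ v) = v ⬝ᵥ v := by
    rw [dotProduct_mulVec, vecMul_transpose, hfix]
  have hnorm : (Pᵀ *ᵥ v) ⬝ᵥ (Pᵀ *ᵥ v) = μ * (v ⬝ᵥ v) := by
    rw [dotProduct_mulVec, vecMul_transpose, mulVec_mulVec, hv, smul_dotProduct, smul_eq_mul]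
  have hcs := sq_dotProduct_le v (Pᵀ *ᵥ v)
  rw [hcross, hnorm, sq] at hcs
  nlinarith [mul_pos hpos hpos]

end Matrix

/-- multiscale variance propagation bound.  If `W̃ W = I_m` and
`P = W W̃`, then every nonzero singular value of `P` is at least `1` (stated
via the eigenvalues `μ` of `P Pᵀ`, whose square roots are the singular values:
any nonzero eigenvalue satisfies `μ ≥ 1`); consequently the squared Frobenius
norm `‖P‖_F² = ∑ᵢⱼ Pᵢⱼ²` is at least `m`, i.e. `κ_F = ‖P‖_F/√m ≥ 1`; and
`κ_F = 1` (i.e. `‖P‖_F² = m`) holds if and only if `P` is symmetric, i.e. `P`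
is the orthogonal projection onto the column space of `W`. -/
theorem multiscale_variance_propagation
    (n m : ℕ) (W : Matrix (Fin n) (Fin m) ℝ) (Wt : Matrix (Fin m) (Fin n) ℝ)
    (hWW : Wt * W = 1) :
    (∀ (μ : ℝ) (v : Fin n → ℝ), v ≠ 0 →
      ((W * Wt) * (W * Wt)ᵀ).mulVec v = μ • v → μ ≠ 0 → 1 ≤ μ) ∧
    ((m : ℝ) ≤ ∑ i, ∑ j, ((W * Wt) i j) ^ 2) ∧
    ((∑ i, ∑ j, ((W * Wt) i j) ^ 2 = (m : ℝ)) ↔ (W * Wt)ᵀ = W * Wt) := by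
  have hP := isIdempotentElem_mul_of_mul_eq_one hWW
  have hdefect : ∑ i, ∑ j, ((W * Wt) i j - (W * Wt) j i) ^ 2
      = 2 * ∑ i, ∑ j, (W * Wt) i j ^ 2 - 2 * m := by
    rw [sum_sq_sub_transpose, hP.eq, trace_mul_eq_of_mul_eq_one hWW]
  have hnonneg : 0 ≤ ∑ i, ∑ j, ((W * Wt) i j - (W * Wt) j i) ^ 2 :=
    Fintype.sum_nonneg fun _ => Fintype.sum_nonneg fun _ => sq_nonneg _
  refine ⟨fun μ v hv0 hv hμ => one_le_of_mul_transpose_mulVec_eq_smul hP hv0 hv hμ,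
    by linarith, ?_⟩
  rw [← sum_sq_sub_transpose_eq_zero_iff, hdefect]
  constructor <;> intro h <;> linarith
end

section
/- Componentwise variance comparison with the orthogonal projection: let n and m be natural numbers, W a real n × m matrix with Wᵀ W invertible, and W̃ a real m × n matrix with W̃ W = I_m. Set P = W W̃ and P⊥ = W (Wᵀ W)⁻¹ Wᵀ. Then every diagonal entry of P Pᵀ − P⊥ P⊥ᵀ is nonnegative; that is, for each i ∈ {1, …, n}, (P Pᵀ)_{ii} ≥ (P⊥ P⊥ᵀ)_{ii}. (Interpreted statistically: for uncorrelated homoscedastic noise ε, the componentwise variance of P ε is at least that of the orthogonal projection P⊥ ε.) -/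
open Matrix

/-!
`P = W W̃` fixes the column space of `W`, so `P P⊥ = P⊥`; together with `P⊥ᵀ = P⊥ = P⊥²` this gives
`P Pᵀ - P⊥ P⊥ᵀ = (P - P⊥)(P - P⊥)ᵀ`, whose diagonal entries are sums of squares.
-/

namespace Matrix

variable {ι κ R : Type*} [Fintype κ]

theorem diag_mul_transpose_self_nonneg [Ring R] [LinearOrder R] [IsStrictOrderedRing R]
    (A : Matrix ι κ R) (i : ι) : 0 ≤ (A * Aᵀ) i i :=
  Finset.sum_nonneg fun j _ => mul_self_nonneg (A i j)

variable [Fintype ι]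

theorem mul_transpose_self_sub_eq_of_isSymm_of_isIdempotentElem [CommRing R] {P Q : Matrix ι ι R}
    (hQ : Q.IsSymm) (hQQ : IsIdempotentElem Q) (hPQ : P * Q = Q) :
    P * Pᵀ - Q * Qᵀ = (P - Q) * (P - Q)ᵀ := by
  have hQP : Q * Pᵀ = Q := by rw [← hQ.eq, ← transpose_mul, hPQ]
  have expand : (P - Q) * (P - Q)ᵀ = P * Pᵀ - P * Qᵀ - Q * Pᵀ + Q * Qᵀ := by
    rw [transpose_sub]; noncomm_ring
  rw [expand, hQ.eq, hPQ, hQP, hQQ.eq]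
  abel

variable [DecidableEq κ] [CommRing R]

theorem isSymm_mul_inv_mul_transpose (W : Matrix ι κ R) : (W * (Wᵀ * W)⁻¹ * Wᵀ).IsSymm := by
  rw [IsSymm, transpose_mul, transpose_mul, transpose_transpose, transpose_nonsing_inv,
    transpose_mul, transpose_transpose, Matrix.mul_assoc]

theorem isIdempotentElem_mul_inv_mul_transpose {W : Matrix ι κ R} (h : IsUnit (Wᵀ * W)) :
    IsIdempotentElem (W * (Wᵀ * W)⁻¹ * Wᵀ) := by
  have hG : (Wᵀ * W)⁻¹ * (Wᵀ * W) = 1 := nonsing_inv_mul _ ((isUnit_iff_isUnit_det _).mp h)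
  calc W * (Wᵀ * W)⁻¹ * Wᵀ * (W * (Wᵀ * W)⁻¹ * Wᵀ)
      = W * ((Wᵀ * W)⁻¹ * (Wᵀ * W)) * (Wᵀ * W)⁻¹ * Wᵀ := by simp only [Matrix.mul_assoc]
    _ = W * (Wᵀ * W)⁻¹ * Wᵀ := by rw [hG, Matrix.mul_one]

theorem mul_mul_inv_mul_transpose_of_mul_eq_one {W : Matrix ι κ R} {V : Matrix κ ι R}
    (h : V * W = 1) : W * V * (W * (Wᵀ * W)⁻¹ * Wᵀ) = W * (Wᵀ * W)⁻¹ * Wᵀ := by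
  simp only [← Matrix.mul_assoc]
  rw [Matrix.mul_assoc W V W, h, Matrix.mul_one]

end Matrix

/-- componentwise variance comparison with the orthogonal
projection.  With `W̃ W = I_m`, `P = W W̃` and the orthogonal projection
`P⊥ = W (Wᵀ W)⁻¹ Wᵀ`, every diagonal entry of `P Pᵀ - P⊥ P⊥ᵀ` is nonnegative:
`(P⊥ P⊥ᵀ)ᵢᵢ ≤ (P Pᵀ)ᵢᵢ` for every `i`. -/
theorem variance_comparison_orthogonal_projection
    (n m : ℕ) (W : Matrix (Fin n) (Fin m) ℝ) (Wt : Matrix (Fin m) (Fin n) ℝ)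
    (hinv : IsUnit (Wᵀ * W)) (hWW : Wt * W = 1) :
    ∀ i : Fin n,
      ((W * (Wᵀ * W)⁻¹ * Wᵀ) * (W * (Wᵀ * W)⁻¹ * Wᵀ)ᵀ) i i ≤
        ((W * Wt) * (W * Wt)ᵀ) i i := by
  intro i
  have hsq := mul_transpose_self_sub_eq_of_isSymm_of_isIdempotentElem
    (isSymm_mul_inv_mul_transpose W) (isIdempotentElem_mul_inv_mul_transpose hinv)
    (mul_mul_inv_mul_transpose_of_mul_eq_one hWW)
  have hnonneg := diag_mul_transpose_self_nonneg (W * Wt - W * (Wᵀ * W)⁻¹ * Wᵀ) i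
  rwa [← hsq, Matrix.sub_apply, sub_nonneg] at hnonneg
end
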